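/- arXiv:1610.09767 — 7 statements merged into one kernel-verified Lean document; each statement's English description precedes it below -/
import Mathlib

section
/- Let C be an [n,k] linear code over a finite field F with locality parameter r, where 2 ≤ r < k. Then C is an (n,k,r,t)-SLRC if and only if for every nonempty subset E ⊆ [n] with |E| ≤ t there exists an index i ∈ E that has a recovering set R ⊆ [n]\E of size at most r. -/
/-! Repair greedily: some erased coordinate is recoverable from the unerased ones; repair it
first and recurse on the remaining erasures, for which it now counts as unerased. -/

open Finset

/-- `R` is a recovering set of coordinate `i` for the linear code `C`:
`R` does not contain `i` and there are nonzero scalars `a j` (`j ∈ R`) with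
`x i = ∑ j ∈ R, a j * x j` for every codeword `x ∈ C`. -/
def IsRecoveringSet {F : Type*} [Field F] {ι : Type*} [Fintype ι] [DecidableEq ι]
    (C : Submodule F (ι → F)) (i : ι) (R : Finset ι) : Prop :=
  i ∉ R ∧ ∃ a : ι → F, (∀ j ∈ R, a j ≠ 0) ∧ ∀ x ∈ C, x i = ∑ j ∈ R, a j * x j

/-- `C` is an `(n,k,r,t)`-sequential locally repairable code: every erased set `E` of
size at most `t` can be indexed as a list `i_1, …, i_{|E|}` such that each `i_ℓ` has a
recovering set of size at most `r` contained in `Eᶜ ∪ {i_1, …, i_{ℓ-1}}`. -/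
def IsSLRC {F : Type*} [Field F] {ι : Type*} [Fintype ι] [DecidableEq ι]
    (C : Submodule F (ι → F)) (r t : ℕ) : Prop :=
  ∀ E : Finset ι, E.card ≤ t →
    ∃ L : List ι, L.Nodup ∧ L.toFinset = E ∧
      ∀ ℓ : Fin L.length, ∃ R : Finset ι,
        IsRecoveringSet C (L.get ℓ) R ∧ R.card ≤ r ∧
        R ⊆ Eᶜ ∪ (L.take ℓ.1).toFinset

section RepairOrder

variable {ι : Type*} [Fintype ι] [DecidableEq ι]

def IsRepairOrder (p : ι → Finset ι → Prop) (E : Finset ι) (L : List ι) : Prop :=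
  L.Nodup ∧ L.toFinset = E ∧ ∀ ℓ : Fin L.length, p (L.get ℓ) (Eᶜ ∪ (L.take ℓ).toFinset)

variable {p : ι → Finset ι → Prop} {E : Finset ι} {L : List ι}

theorem IsRepairOrder.exists_mem (hL : IsRepairOrder p E L) (hE : E.Nonempty) : ∃ i ∈ E, p i Eᶜ := by
  obtain ⟨-, hLE, hp⟩ := hL
  have hlen : 0 < L.length := by
    rw [List.length_pos_iff]
    rintro rfl
    simp [← hLE] at hE
  refine ⟨L.get ⟨0, hlen⟩, hLE ▸ List.mem_toFinset.2 (L.get_mem _), ?_⟩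
  simpa using hp ⟨0, hlen⟩

theorem IsRepairOrder.cons {i : ι}
    (hi : i ∈ E) (hpi : p i Eᶜ) (hL : IsRepairOrder p (E.erase i) L) :
    IsRepairOrder p E (i :: L) := by
  obtain ⟨hnd, hLE, hp⟩ := hL
  have hiL : i ∉ L := fun h ↦ by simpa [hLE] using List.mem_toFinset.2 h
  refine ⟨List.nodup_cons.2 ⟨hiL, hnd⟩, by simp [hLE, insert_erase hi], ?_⟩
  intro ℓ
  cases ℓ using Fin.cases with
  | zero => simpa using hpi
  | succ m =>
    have hset : Eᶜ ∪ ((i :: L).take (m.1 + 1)).toFinset = (E.erase i)ᶜ ∪ (L.take m).toFinset := by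
      rw [compl_erase, List.take_succ_cons, List.toFinset_cons, union_insert, insert_union]
    simpa [hset] using hp m

theorem exists_isRepairOrder
    (h : ∀ E' ⊆ E, E'.Nonempty → ∃ i ∈ E', p i E'ᶜ) : ∃ L, IsRepairOrder p E L := by
  induction E using Finset.strongInduction with
  | H E ih =>
    rcases E.eq_empty_or_nonempty with rfl | hE
    · exact ⟨[], by simp [IsRepairOrder]⟩
    obtain ⟨i, hi, hpi⟩ := h E subset_rfl hE
    obtain ⟨L, hL⟩ := ih (E.erase i) (erase_ssubset hi)
      fun E' hE' ↦ h E' (hE'.trans (erase_subset i E))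
    exact ⟨i :: L, hL.cons hi hpi⟩

end RepairOrder

theorem slrc_iff_exists_recoverable_general {F : Type*} [Field F] {n r t : ℕ}
    (C : Submodule F (Fin n → F)) :
    IsSLRC C r t ↔
      ∀ E : Finset (Fin n), E.Nonempty → E.card ≤ t →
        ∃ i ∈ E, ∃ R : Finset (Fin n),
          IsRecoveringSet C i R ∧ R.card ≤ r ∧ R ⊆ Eᶜ := by
  let p : Fin n → Finset (Fin n) → Prop :=
    fun i S ↦ ∃ R, IsRecoveringSet C i R ∧ R.card ≤ r ∧ R ⊆ S
  change (∀ E : Finset (Fin n), E.card ≤ t → ∃ L, IsRepairOrder p E L) ↔ _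
  constructor
  · intro h E hE hEt
    obtain ⟨L, hL⟩ := h E hEt
    exact hL.exists_mem hE
  · intro h E hEt
    exact exists_isRepairOrder fun E' hE' hne ↦ h E' hne ((card_le_card hE').trans hEt)

/-- Lemma 1: `C` is an `(n,k,r,t)`-SLRC iff for every nonempty `E ⊆ [n]` of size at
most `t` there is `i ∈ E` having a recovering set `R ⊆ [n] \ E` of size at most `r`. -/
theorem slrc_iff_exists_recoverable {F : Type*} [Field F] [Fintype F] {n k r t : ℕ}
    (C : Submodule F (Fin n → F)) (hk : Module.finrank F C = k)
    (hr2 : 2 ≤ r) (hrk : r < k) :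
    IsSLRC C r t ↔
      ∀ E : Finset (Fin n), E.Nonempty → E.card ≤ t →
        ∃ i ∈ E, ∃ R : Finset (Fin n),
          IsRecoveringSet C i R ∧ R.card ≤ r ∧ R ⊆ Eᶜ :=
  slrc_iff_exists_recoverable_general C
end

section
/- Let [n] = A ∪ B with A ∩ B = ∅, let t_1, t_2 ≥ 0, and let C be an [n,k] linear code over a finite field F such that: (1) for every nonempty E ⊆ A with |E| ≤ t_1 there exists i ∈ E having a recovering set R ⊆ A\E of size at most r; (2) for every nonempty E ⊆ A with |E| ≤ t_1 + t_2 + 1 there exists i ∈ E having a recovering set R ⊆ [n]\E of size at most r; (3) for every nonempty E ⊆ B with |E| ≤ t_2 there exists i ∈ E having a recovering set R ⊆ B\E of size at most r; (4) for every nonempty E ⊆ B with |E| ≤ t_1 + t_2 + 1 there exists i ∈ E having a recovering set R ⊆ [n]\E of size at most r. Then C is an (n,k,r,t)-SLRC with t = t_1 + t_2 + 1. -/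
open Finset

lemma slrc_aux {F : Type*} [Field F] {ι : Type*} [Fintype ι] [DecidableEq ι]
    (C : Submodule F (ι → F)) (r : ℕ) :
    ∀ E : Finset ι,
      (∀ S ⊆ E, S.Nonempty → ∃ i ∈ S, ∃ R : Finset ι,
        IsRecoveringSet C i R ∧ R.card ≤ r ∧ R ⊆ Sᶜ) →
      ∃ L : List ι, L.Nodup ∧ L.toFinset = E ∧
        ∀ ℓ : Fin L.length, ∃ R : Finset ι,
          IsRecoveringSet C (L.get ℓ) R ∧ R.card ≤ r ∧
          R ⊆ Eᶜ ∪ (L.take ℓ.1).toFinset := by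
  intro E
  induction E using Finset.strongInduction with
  | _ E ih =>
    intro hQ
    rcases E.eq_empty_or_nonempty with rfl | hne
    · exact ⟨[], by simp, by simp, fun ℓ => ℓ.elim0⟩
    · obtain ⟨i, hiE, R, hRec, hRr, hRsub⟩ := hQ E (Finset.Subset.refl E) hne
      obtain ⟨L', hnd, htf, hrec⟩ := ih (E.erase i) (Finset.erase_ssubset hiE)
        (fun S hS hSne => hQ S (hS.trans (Finset.erase_subset i E)) hSne)
      have hiL' : i ∉ L' := by
        intro h
        have : i ∈ E.erase i := htf ▸ List.mem_toFinset.mpr h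
        simp at this
      refine ⟨i :: L', List.nodup_cons.mpr ⟨hiL', hnd⟩, ?_, ?_⟩
      · simp [htf, Finset.insert_erase hiE]
      · intro ℓ
        refine Fin.cases ?_ ?_ ℓ
        · refine ⟨R, hRec, hRr, ?_⟩
          simpa using hRsub.trans (by simp)
        · intro j
          obtain ⟨R', h1', h2', h3'⟩ := hrec j
          refine ⟨R', h1', h2', ?_⟩
          intro x hx
          have := h3' hx
          simp only [Finset.compl_erase, Fin.val_succ, List.take_succ_cons, List.toFinset_cons,
            Finset.mem_union, Finset.mem_insert] at this ⊢
          tauto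

/-- Lemma 2: if `[n] = A ∪ B` with `A ∩ B = ∅` and conditions (1)-(4) hold,
then `C` is an `(r, t₁ + t₂ + 1)`-SLRC. -/
theorem slrc_of_partition {F : Type*} [Field F] [Fintype F] {n k r : ℕ} (t₁ t₂ : ℕ)
    (C : Submodule F (Fin n → F)) (hk : Module.finrank F C = k)
    (hr2 : 2 ≤ r) (hrk : r < k)
    (A B : Finset (Fin n)) (hunion : A ∪ B = univ) (hdisj : A ∩ B = ∅)
    (h1 : ∀ E : Finset (Fin n), E ⊆ A → E.Nonempty → E.card ≤ t₁ →
      ∃ i ∈ E, ∃ R : Finset (Fin n),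
        IsRecoveringSet C i R ∧ R.card ≤ r ∧ R ⊆ A \ E)
    (h2 : ∀ E : Finset (Fin n), E ⊆ A → E.Nonempty → E.card ≤ t₁ + t₂ + 1 →
      ∃ i ∈ E, ∃ R : Finset (Fin n),
        IsRecoveringSet C i R ∧ R.card ≤ r ∧ R ⊆ Eᶜ)
    (h3 : ∀ E : Finset (Fin n), E ⊆ B → E.Nonempty → E.card ≤ t₂ →
      ∃ i ∈ E, ∃ R : Finset (Fin n),
        IsRecoveringSet C i R ∧ R.card ≤ r ∧ R ⊆ B \ E)
    (h4 : ∀ E : Finset (Fin n), E ⊆ B → E.Nonempty → E.card ≤ t₁ + t₂ + 1 →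
      ∃ i ∈ E, ∃ R : Finset (Fin n),
        IsRecoveringSet C i R ∧ R.card ≤ r ∧ R ⊆ Eᶜ) :
    IsSLRC C r (t₁ + t₂ + 1) := by
  intro E hE
  have hEcard : (E ∩ A).card + (E ∩ B).card ≤ t₁ + t₂ + 1 := by
    have hd : Disjoint (E ∩ A) (E ∩ B) := by
      rw [Finset.disjoint_left]
      intro x hx hx'
      have : x ∈ A ∩ B := Finset.mem_inter.mpr
        ⟨(Finset.mem_inter.mp hx).2, (Finset.mem_inter.mp hx').2⟩
      simp [hdisj] at this
    have hu : (E ∩ A) ∪ (E ∩ B) = E := by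
      rw [← Finset.inter_union_distrib_left, hunion, Finset.inter_univ]
    calc (E ∩ A).card + (E ∩ B).card = ((E ∩ A) ∪ (E ∩ B)).card :=
          (Finset.card_union_of_disjoint hd).symm
      _ = E.card := by rw [hu]
      _ ≤ t₁ + t₂ + 1 := hE
  apply slrc_aux
  by_cases hA : (E ∩ A).card ≤ t₁
  · -- repair A-part first using h1, B-part using h4
    intro S hSE hSne
    by_cases hSA : (S ∩ A).Nonempty
    · obtain ⟨i, hi, R, hRec, hRr, hRsub⟩ := h1 (S ∩ A) (Finset.inter_subset_right)
        hSA (le_trans (Finset.card_le_card (Finset.inter_subset_inter hSE Finset.Subset.rfl)) hA)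
      refine ⟨i, (Finset.mem_inter.mp hi).1, R, hRec, hRr, ?_⟩
      intro x hx
      have := hRsub hx
      rw [Finset.mem_sdiff] at this
      rw [Finset.mem_compl]
      intro hxS
      exact this.2 (Finset.mem_inter.mpr ⟨hxS, this.1⟩)
    · have hSB : S ⊆ B := by
        intro x hxS
        have hxU : x ∈ A ∪ B := hunion ▸ Finset.mem_univ x
        rcases Finset.mem_union.mp hxU with h | h
        · exact absurd ⟨x, Finset.mem_inter.mpr ⟨hxS, h⟩⟩ hSA
        · exact h
      obtain ⟨i, hi, R, hRec, hRr, hRsub⟩ := h4 S hSB hSne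
        (le_trans (Finset.card_le_card hSE) hE)
      exact ⟨i, hi, R, hRec, hRr, hRsub⟩
  · have hB : (E ∩ B).card ≤ t₂ := by omega
    intro S hSE hSne
    by_cases hSB : (S ∩ B).Nonempty
    · obtain ⟨i, hi, R, hRec, hRr, hRsub⟩ := h3 (S ∩ B) (Finset.inter_subset_right)
        hSB (le_trans (Finset.card_le_card (Finset.inter_subset_inter hSE Finset.Subset.rfl)) hB)
      refine ⟨i, (Finset.mem_inter.mp hi).1, R, hRec, hRr, ?_⟩
      intro x hx
      have := hRsub hx
      rw [Finset.mem_sdiff] at this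
      rw [Finset.mem_compl]
      intro hxS
      exact this.2 (Finset.mem_inter.mpr ⟨hxS, this.1⟩)
    · have hSA : S ⊆ A := by
        intro x hxS
        have hxU : x ∈ A ∪ B := hunion ▸ Finset.mem_univ x
        rcases Finset.mem_union.mp hxU with h | h
        · exact h
        · exact absurd ⟨x, Finset.mem_inter.mpr ⟨hxS, h⟩⟩ hSB
      obtain ⟨i, hi, R, hRec, hRr, hRsub⟩ := h2 S hSA hSne
        (le_trans (Finset.card_le_card hSE) hE)
      exact ⟨i, hi, R, hRec, hRr, hRsub⟩
end

section
/- Let C be an (n,k,r,t)-SLRC and let G be any repair graph of C with source set S(G). Then k ≤ |S(G)|. In particular, k ≤ δ*, where δ* is the minimum number of sources over all repair graphs of C. -/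
open Finset

/-- In-neighbors of vertex `i` in the directed graph with adjacency `adj`. -/
def InN {n : ℕ} (adj : Fin n → Fin n → Bool) (i : Fin n) : Finset (Fin n) :=
  Finset.univ.filter (fun j => adj j i)

/-- Out-neighbors of vertex `v`. -/
def OutN {n : ℕ} (adj : Fin n → Fin n → Bool) (v : Fin n) : Finset (Fin n) :=
  Finset.univ.filter (fun j => adj v j)

/-- The set of sources (vertices with no in-neighbors). -/
def Sources {n : ℕ} (adj : Fin n → Fin n → Bool) : Finset (Fin n) :=
  Finset.univ.filter (fun i => InN adj i = ∅)

/-- `Out(E) = (⋃ v ∈ E, Out(v)) \ E`. -/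
def OutSet {n : ℕ} (adj : Fin n → Fin n → Bool) (E : Finset (Fin n)) : Finset (Fin n) :=
  (E.biUnion (OutN adj)) \ E

/-- `Out²(v) = (⋃ u ∈ Out(v), Out(u)) \ Out(v)`. -/
def Out2 {n : ℕ} (adj : Fin n → Fin n → Bool) (v : Fin n) : Finset (Fin n) :=
  ((OutN adj v).biUnion (OutN adj)) \ OutN adj v

/-- The directed graph `adj` is acyclic. -/
def IsAcyclicD {n : ℕ} (adj : Fin n → Fin n → Bool) : Prop :=
  ∀ v : Fin n, ¬ Relation.TransGen (fun a b => adj a b = true) v v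

/-- The number of directed edges of `adj`. -/
def EdgeCount {n : ℕ} (adj : Fin n → Fin n → Bool) : ℕ :=
  (Finset.univ.filter (fun p : Fin n × Fin n => adj p.1 p.2)).card

/-- `adj` is a repair graph of the code `C` (with locality `r`): it is a finite DAG
on the coordinates such that every vertex with at least one in-neighbor has its
in-neighbor set a recovering set of size at most `r`. -/
def IsRepairGraph {F : Type*} [Field F] {n : ℕ} (C : Submodule F (Fin n → F)) (r : ℕ)
    (adj : Fin n → Fin n → Bool) : Prop :=
  IsAcyclicD adj ∧ ∀ i : Fin n, (InN adj i).Nonempty →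
    IsRecoveringSet C i (InN adj i) ∧ (InN adj i).card ≤ r

/-- `adj` is a minimal repair graph of `C`: a repair graph whose number of sources is
minimum among all repair graphs of `C`. -/
def IsMinimalRepairGraph {F : Type*} [Field F] {n : ℕ} (C : Submodule F (Fin n → F)) (r : ℕ)
    (adj : Fin n → Fin n → Bool) : Prop :=
  IsRepairGraph C r adj ∧
    ∀ adj' : Fin n → Fin n → Bool, IsRepairGraph C r adj' →
      (Sources adj).card ≤ (Sources adj').card

/-- Lemma 4: for any repair graph `G` of an `(n,k,r,t)`-SLRC `C`, `k ≤ |S(G)|`.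
In particular `k ≤ δ*`. -/
theorem dim_le_sources {F : Type*} [Field F] [Fintype F] {n k r t : ℕ}
    (C : Submodule F (Fin n → F)) (hk : Module.finrank F C = k)
    (hr2 : 2 ≤ r) (hrk : r < k) (hC : IsSLRC C r t)
    (adj : Fin n → Fin n → Bool) (hG : IsRepairGraph C r adj) :
    k ≤ (Sources adj).card := by
  subst hk
  -- the edge relation is well-founded since the graph is acyclic on a finite type
  have hwf : WellFounded (fun a b : Fin n => adj a b = true) := by
    have htg : WellFounded (Relation.TransGen (fun a b : Fin n => adj a b = true)) := by
      have : IsIrrefl (Fin n) (Relation.TransGen (fun a b : Fin n => adj a b = true)) :=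
        ⟨hG.1⟩
      exact Finite.wellFounded_of_trans_of_irrefl _
    exact Subrelation.wf (r := Relation.TransGen (fun a b : Fin n => adj a b = true))
      (q := fun a b => adj a b = true) (fun h => Relation.TransGen.single h) htg
  -- projection to sources
  let f : C →ₗ[F] ({j // j ∈ Sources adj} → F) :=
    (LinearMap.funLeft F F (Subtype.val)).comp C.subtype
  have hinj : Function.Injective f := by
    rw [← LinearMap.ker_eq_bot, LinearMap.ker_eq_bot']
    intro x hx
    have hx' : ∀ j ∈ Sources adj, (x : Fin n → F) j = 0 := by
      intro j hj
      exact congrFun hx ⟨j, hj⟩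
    have hzero : ∀ i : Fin n, (x : Fin n → F) i = 0 := by
      intro i
      induction i using hwf.induction with
      | _ i ih =>
        by_cases hne : (InN adj i).Nonempty
        · obtain ⟨⟨hni, a, ha, hrec⟩, _⟩ := hG.2 i hne
          rw [hrec x x.2]
          apply Finset.sum_eq_zero
          intro j hj
          have : adj j i = true := by
            simpa [InN] using hj
          rw [ih j this, mul_zero]
        · apply hx' i
          simp only [Sources, Finset.mem_filter, Finset.mem_univ, true_and]
          rwa [Finset.not_nonempty_iff_eq_empty] at hne
    ext j
    exact hzero j
  calc Module.finrank F C ≤ Module.finrank F ({j // j ∈ Sources adj} → F) :=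
        LinearMap.finrank_le_finrank_of_injective hinj
    _ = (Sources adj).card := by
        rw [Module.finrank_fintype_fun_eq_card, Fintype.card_coe]
end

section
/- Let C be an (n,k,r,3)-SLRC over a finite field F, with 2 ≤ r < k. Then the code rate satisfies k/n ≤ (r/(r+1))², equivalently n ≥ k·(1 + 1/r)² = k(1 + 2/r + 1/r²). -/
open Finset

/-!
Sequential recovery of an erasure set `E` with `#E ≤ 3` starts with a coordinate `u ∈ E` recovered
from outside `E`, i.e. a dual codeword of weight `≤ r + 1` that is nonzero at `u` and vanishes on
the rest of `E`. Take a basis `B` of the span of the dual codewords of weight `≤ r + 1`, so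
`#B ≤ n - k`. Expanding the above dual codewords in `B` shows: every coordinate is covered by some
`w ∈ B`; each `w ∈ B` is the only cover of at most one coordinate (call `w` private if it is the
only cover of one); and no coordinate covered exactly twice is covered by two private vectors.
Counting the incidences of `B` and of the private vectors coordinate by coordinate then yields
`(2r + 1) n ≤ (r + 1)² #B ≤ (r + 1)² (n - k)`, that is `(r + 1)² k ≤ r² n`.
-/

open Module Matrix Submodule

section LinearAlgebra

variable {K V : Type*} [Field K] [AddCommGroup V] [Module K V]

theorem exists_finset_subset_span_eq_card_le_finrank [FiniteDimensional K V]
    {W : Submodule K V} {S : Set V} (hS : S ⊆ W) :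
    ∃ B : Finset V, ↑B ⊆ S ∧ span K (B : Set V) = span K S ∧ #B ≤ finrank K W := by
  obtain ⟨b, hbS, hspan, hli⟩ := exists_linearIndependent K S
  lift b to Finset V using hli.setFinite
  refine ⟨b, hbS, hspan, ?_⟩
  rw [← finrank_span_finset_eq_card hli]
  exact finrank_mono (span_le.2 (hbS.trans hS))

end LinearAlgebra

section DualCode

variable {F ι : Type*} [Field F] [Fintype ι]

def dualCode (C : Submodule F (ι → F)) : Submodule F (ι → F) :=
  LinearMap.BilinForm.orthogonal (dotProductBilin F F) C

theorem mem_dualCode {C : Submodule F (ι → F)} {v : ι → F} :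
    v ∈ dualCode C ↔ ∀ x ∈ C, x ⬝ᵥ v = 0 := Iff.rfl

theorem ker_dotProductBilin :
    LinearMap.ker (dotProductBilin F F : LinearMap.BilinForm F (ι → F)) = ⊥ := by
  classical
  refine LinearMap.ker_eq_bot'.2 fun x hx => funext fun i => ?_
  simpa using LinearMap.congr_fun hx (Pi.single i 1)

theorem finrank_add_finrank_dualCode (C : Submodule F (ι → F)) :
    finrank F C + finrank F (dualCode C) = Fintype.card ι := by
  have := LinearMap.BilinForm.finrank_add_finrank_orthogonal' (B := dotProductBilin F F) C
  rwa [ker_dotProductBilin, inf_bot_eq, finrank_bot, add_zero,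
    finrank_fintype_fun_eq_card] at this

end DualCode

section Isolation

variable {F ι : Type*} [Field F]

def IsolatesSets (V : Submodule F (ι → F)) (t : ℕ) : Prop :=
  ∀ E : Finset ι, #E ≤ t → E.Nonempty →
    ∃ u ∈ E, ∃ v ∈ V, v u ≠ 0 ∧ ∀ e ∈ E, e ≠ u → v e = 0

theorem IsolatesSets.mono {V : Submodule F (ι → F)} {s t : ℕ} (h : IsolatesSets V t)
    (hst : s ≤ t) : IsolatesSets V s :=
  fun E hE => h E (hE.trans hst)

end Isolation

section Counting

variable {F ι : Type*} [Field F] [DecidableEq F] {B : Finset (ι → F)} {w : ι → F} {i : ι}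

def coverers (B : Finset (ι → F)) (i : ι) : Finset (ι → F) := {w ∈ B | w i ≠ 0}

theorem mem_coverers : w ∈ coverers B i ↔ w ∈ B ∧ w i ≠ 0 := mem_filter

theorem exists_apply_eq_sum_coverers {v : ι → F} (hv : v ∈ span F (B : Set (ι → F))) :
    ∃ g : (ι → F) → F, ∀ i, v i = ∑ w ∈ coverers B i, g w * w i := by
  obtain ⟨g, -, rfl⟩ := mem_span_finset.1 hv
  refine ⟨g, fun i => ?_⟩
  rw [Finset.sum_apply, coverers, sum_filter_of_ne fun w _ h => right_ne_zero_of_mul h]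
  rfl

theorem apply_eq_zero_iff_of_coverers_eq_singleton {v : ι → F} {g : (ι → F) → F}
    (hg : ∀ i, v i = ∑ w ∈ coverers B i, g w * w i) (hi : coverers B i = {w}) :
    v i = 0 ↔ g w = 0 := by
  have hwi : w i ≠ 0 := (mem_coverers.1 (hi ▸ mem_singleton_self w)).2
  simp [hg, hi, hwi]

theorem coverers_nonempty (hB : IsolatesSets (span F (B : Set (ι → F))) 1) (i : ι) :
    (coverers B i).Nonempty := by
  obtain ⟨u, hu, v, hv, hvu, -⟩ := hB {i} (by simp) (singleton_nonempty i)
  obtain rfl := mem_singleton.1 hu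
  obtain ⟨g, hg⟩ := exists_apply_eq_sum_coverers hv
  rw [nonempty_iff_ne_empty]
  intro h
  simp [hg, h] at hvu

theorem sum_hammingNorm_eq_sum_card_coverers [Fintype ι] (S : Finset (ι → F)) :
    ∑ w ∈ S, hammingNorm w = ∑ i, #(coverers S i) := by
  simp only [hammingNorm, coverers, card_eq_sum_ones, sum_filter]
  exact sum_comm

variable [DecidableEq ι]

theorem subsingleton_setOf_coverers_eq_singleton
    (hB : IsolatesSets (span F (B : Set (ι → F))) 2) (w : ι → F) :
    {i | coverers B i = {w}}.Subsingleton := by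
  intro i hi j hj
  by_contra hij
  obtain ⟨u, hu, v, hv, hvu, hvE⟩ := hB {i, j} card_le_two (insert_nonempty i {j})
  obtain ⟨g, hg⟩ := exists_apply_eq_sum_coverers hv
  have hvi := apply_eq_zero_iff_of_coverers_eq_singleton hg hi
  have hvj := apply_eq_zero_iff_of_coverers_eq_singleton hg hj
  rcases mem_insert.1 hu with rfl | hu
  · exact hvu (hvi.2 (hvj.1 (hvE j (by simp) (Ne.symm hij))))
  · obtain rfl := mem_singleton.1 hu
    exact hvu (hvj.2 (hvi.1 (hvE i (by simp) hij)))

variable [Fintype ι]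

theorem coverers_ne_pair (hB : IsolatesSets (span F (B : Set (ι → F))) 3) {w w' : ι → F}
    (hww' : w ≠ w') {j j' : ι} (hj : coverers B j = {w}) (hj' : coverers B j' = {w'}) (c : ι) :
    coverers B c ≠ {w, w'} := by
  intro hc
  have hjj' : j ≠ j' := by rintro rfl; exact hww' (singleton_injective (hj.symm.trans hj'))
  have hcj : c ≠ j := by
    rintro rfl; simpa [card_pair hww'] using congrArg card (hc.symm.trans hj)
  have hcj' : c ≠ j' := by
    rintro rfl; simpa [card_pair hww'] using congrArg card (hc.symm.trans hj')
  obtain ⟨u, hu, v, hv, hvu, hvE⟩ := hB {j, j', c} card_le_three (insert_nonempty _ _)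
  obtain ⟨g, hg⟩ := exists_apply_eq_sum_coverers hv
  have hvj := apply_eq_zero_iff_of_coverers_eq_singleton hg hj
  have hvj' := apply_eq_zero_iff_of_coverers_eq_singleton hg hj'
  have hwc : w c ≠ 0 := (mem_coverers.1 (hc ▸ mem_insert_self w {w'})).2
  have hw'c : w' c ≠ 0 := (mem_coverers.1 (hc ▸ mem_insert_of_mem (mem_singleton_self w'))).2
  have hvc : v c = g w * w c + g w' * w' c := by rw [hg, hc, sum_pair hww']
  simp only [mem_insert, mem_singleton] at hu hvE
  rcases hu with rfl | rfl | rfl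
  · have hgw' := hvj'.1 (hvE j' (by simp) (Ne.symm hjj'))
    have := hvE c (by simp) hcj
    simp_all
  · have hgw := hvj.1 (hvE j (by simp) hjj')
    have := hvE c (by simp) hcj'
    simp_all
  · have hgw := hvj.1 (hvE j (by simp) (Ne.symm hcj))
    have hgw' := hvj'.1 (hvE j' (by simp) (Ne.symm hcj'))
    simp_all

def privateVectors (B : Finset (ι → F)) : Finset (ι → F) :=
  {w ∈ B | ∃ i, coverers B i = {w}}

theorem card_coverers_privateVectors_le_one (hB : IsolatesSets (span F (B : Set (ι → F))) 3)
    (hi : #(coverers B i) ≤ 2) : #(coverers (privateVectors B) i) ≤ 1 := by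
  refine card_le_one.2 fun w hw w' hw' => by_contra fun hww' => ?_
  obtain ⟨hwP, hwi⟩ := mem_coverers.1 hw
  obtain ⟨hw'P, hw'i⟩ := mem_coverers.1 hw'
  obtain ⟨hwB, j, hj⟩ := mem_filter.1 hwP
  obtain ⟨hw'B, j', hj'⟩ := mem_filter.1 hw'P
  have hpair : {w, w'} ⊆ coverers B i := by
    simp only [insert_subset_iff, singleton_subset_iff, mem_coverers]
    exact ⟨⟨hwB, hwi⟩, hw'B, hw'i⟩
  exact coverers_ne_pair hB hww' hj hj' i
    (eq_of_subset_of_card_le hpair (by rwa [card_pair hww'])).symm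

theorem card_filter_card_coverers_eq_one_le (hB : IsolatesSets (span F (B : Set (ι → F))) 2) :
    #{i | #(coverers B i) = 1} ≤ #(privateVectors B) := by
  refine card_le_card_of_forall_subsingleton (fun i w => coverers B i = {w}) (fun i hi => ?_)
    fun w _ => (subsingleton_setOf_coverers_eq_singleton hB w).anti fun i hi => hi.2
  obtain ⟨w, hw⟩ := card_eq_one.1 (mem_filter.1 hi).2
  exact ⟨w, mem_filter.2 ⟨(mem_coverers.1 (hw ▸ mem_singleton_self w)).1, i, hw⟩, hw⟩

theorem mul_card_le_sq_mul_card (hB : IsolatesSets (span F (B : Set (ι → F))) 3) {r : ℕ}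
    (hr : 1 ≤ r) (hwt : ∀ w ∈ B, hammingNorm w ≤ r + 1) :
    (2 * r + 1) * Fintype.card ι ≤ (r + 1) ^ 2 * #B := by
  set P := privateVectors B
  have hPB : P ⊆ B := filter_subset _ B
  have hcoord (i : ι) : #(coverers P i) + (2 * r + 1) ≤
      (r + 1) * #(coverers B i) + (r + 1) * if #(coverers B i) = 1 then 1 else 0 := by
    have hpos := (coverers_nonempty (hB.mono (by norm_num)) i).card_pos
    have hle : #(coverers P i) ≤ #(coverers B i) := card_le_card (filter_subset_filter _ hPB)
    rcases (by omega : #(coverers B i) ≤ 2 ∨ 3 ≤ #(coverers B i)) with h | h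
    · have : #(coverers P i) ≤ 1 := card_coverers_privateVectors_le_one hB h
      obtain h | h : #(coverers B i) = 1 ∨ #(coverers B i) = 2 := by omega
      · rw [if_pos h, h]; omega
      · rw [if_neg (by omega), h]; omega
    · rw [if_neg (by omega)]
      nlinarith
  have hsum : ∑ i, #(coverers P i) + (2 * r + 1) * Fintype.card ι ≤
      (r + 1) * ∑ w ∈ B, hammingNorm w + (r + 1) * #{i | #(coverers B i) = 1} := by
    have := sum_le_sum fun i (_ : i ∈ univ) => hcoord i
    rwa [sum_add_distrib, sum_const, card_univ, smul_eq_mul, mul_comm, sum_add_distrib,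
      ← mul_sum, ← mul_sum, sum_boole, Nat.cast_id,
      ← sum_hammingNorm_eq_sum_card_coverers B] at this
  have hsdiff : ∑ w ∈ B \ P, hammingNorm w ≤ (r + 1) * #(B \ P) := by
    simpa [mul_comm] using sum_le_card_nsmul _ _ _ fun w hw => hwt w (sdiff_subset hw)
  have hBP :
      ∑ w ∈ B, hammingNorm w + (r + 1) * #P ≤ ∑ i, #(coverers P i) + (r + 1) * #B := by
    rw [← sum_sdiff hPB, ← card_sdiff_add_card_eq_card hPB,
      ← sum_hammingNorm_eq_sum_card_coverers]
    linarith
  have hW : ∑ w ∈ B, hammingNorm w ≤ (r + 1) * #B := by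
    simpa [mul_comm] using sum_le_card_nsmul _ _ _ hwt
  have hJ := card_filter_card_coverers_eq_one_le (hB.mono (by norm_num : 2 ≤ 3))
  -- with `W = ∑ w ∈ B, hammingNorm w`, `hsum`, `hJ` and `hBP` give `(2r + 1) n ≤ r W + (r + 1) #B`
  linarith [Nat.mul_le_mul_left (r + 1) hJ, Nat.mul_le_mul_left r hW]

end Counting

section Recovery

variable {F ι : Type*} [Field F] [Fintype ι]

theorem hammingNorm_le_card_of_forall_notMem [DecidableEq F] {v : ι → F} {s : Finset ι}
    (h : ∀ j ∉ s, v j = 0) : hammingNorm v ≤ #s :=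
  card_le_card fun j hj => by_contra fun hjs => (mem_filter.1 hj).2 (h j hjs)

variable [DecidableEq ι]

theorem IsRecoveringSet.exists_mem_dualCode {C : Submodule F (ι → F)} {i : ι} {R : Finset ι}
    (h : IsRecoveringSet C i R) :
    ∃ v ∈ dualCode C, v i ≠ 0 ∧ ∀ j ∉ insert i R, v j = 0 := by
  obtain ⟨hiR, a, -, hrel⟩ := h
  refine ⟨Pi.single i 1 - ∑ j ∈ R, Pi.single j (a j), mem_dualCode.2 fun x hx => ?_, ?_,
    fun j hj => ?_⟩
  · simp [dotProduct_sub, dotProduct_sum, hrel x hx, mul_comm]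
  · simp [Finset.sum_apply, Pi.single_apply, hiR]
  · simp only [mem_insert, not_or] at hj
    simp [Finset.sum_apply, Pi.single_apply, hj.1, hj.2]

variable [DecidableEq F]

theorem IsSLRC.isolatesSets {C : Submodule F (ι → F)} {r t : ℕ} (hC : IsSLRC C r t) :
    IsolatesSets (span F {v | v ∈ dualCode C ∧ hammingNorm v ≤ r + 1}) t := by
  intro E hE hne
  obtain ⟨L, -, hLE, hrec⟩ := hC E hE
  have hL : 0 < L.length := List.length_pos_iff.2 (by rintro rfl; simp [← hLE] at hne)
  -- the first erasure of the order is recovered from outside `E`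
  obtain ⟨R, hR, hRr, hRE⟩ := hrec ⟨0, hL⟩
  obtain ⟨v, hv, hvu, hvR⟩ := hR.exists_mem_dualCode
  refine ⟨_, hLE ▸ List.mem_toFinset.2 (L.get_mem _), v, subset_span ⟨hv, ?_⟩, hvu,
    fun e he heu => hvR e ?_⟩
  · exact (hammingNorm_le_card_of_forall_notMem hvR).trans ((card_insert_le _ _).trans (by omega))
  · simp only [List.take_zero, List.toFinset_nil, union_empty] at hRE
    exact mem_insert.not.2 (not_or.2 ⟨heu, fun heR => mem_compl.1 (hRE heR) he⟩)

end Recovery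

section RealArithmetic

variable {k n r : ℕ}

theorem div_le_sq_of_sq_mul_le (h : (r + 1) ^ 2 * k ≤ r ^ 2 * n) :
    (k : ℝ) / n ≤ ((r : ℝ) / (r + 1)) ^ 2 := by
  rcases n.eq_zero_or_pos with rfl | hn
  · simp only [CharP.cast_eq_zero, div_zero]; positivity
  rw [div_pow, div_le_div_iff₀ (by positivity) (by positivity)]
  linarith [(by exact_mod_cast h : ((r : ℝ) + 1) ^ 2 * k ≤ r ^ 2 * n)]

theorem mul_one_add_inv_sq_le_of_sq_mul_le (hr : 0 < r) (h : (r + 1) ^ 2 * k ≤ r ^ 2 * n) :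
    (k : ℝ) * (1 + 1 / r) ^ 2 ≤ n := by
  rw [one_add_div (by positivity), div_pow, mul_div_assoc', div_le_iff₀ (by positivity)]
  linarith [(by exact_mod_cast h : ((r : ℝ) + 1) ^ 2 * k ≤ r ^ 2 * n)]

end RealArithmetic

theorem rate_bound_t3_general {F : Type*} [Field F] {n k r : ℕ}
    (C : Submodule F (Fin n → F)) (hk : Module.finrank F C = k)
    (hr2 : 2 ≤ r) (hC : IsSLRC C r 3) :
    (k : ℝ) / n ≤ ((r : ℝ) / (r + 1)) ^ 2 ∧ (k : ℝ) * (1 + 1 / r) ^ 2 ≤ n := by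
  classical
  obtain ⟨B, hBS, hspan, hBcard⟩ := exists_finset_subset_span_eq_card_le_finrank
    (W := dualCode C) (S := {v | v ∈ dualCode C ∧ hammingNorm v ≤ r + 1}) fun v hv => hv.1
  have hcount : (2 * r + 1) * n ≤ (r + 1) ^ 2 * #B := by
    simpa using mul_card_le_sq_mul_card (hspan ▸ hC.isolatesSets) (by omega)
      fun w hw => (hBS hw).2
  have hdim := finrank_add_finrank_dualCode C
  rw [hk, Fintype.card_fin] at hdim
  have hnat : (r + 1) ^ 2 * k ≤ r ^ 2 * n := by nlinarith
  exact ⟨div_le_sq_of_sq_mul_le hnat, mul_one_add_inv_sq_le_of_sq_mul_le (by omega) hnat⟩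

/-- Theorem 1: the rate of an `(n,k,r,3)`-SLRC satisfies `k/n ≤ (r/(r+1))²`,
equivalently `n ≥ k·(1 + 1/r)²`. -/
theorem rate_bound_t3 {F : Type*} [Field F] [Fintype F] {n k r : ℕ}
    (C : Submodule F (Fin n → F)) (hk : Module.finrank F C = k)
    (hr2 : 2 ≤ r) (hrk : r < k) (hC : IsSLRC C r 3) :
    (k : ℝ) / n ≤ ((r : ℝ) / (r + 1)) ^ 2 ∧ (k : ℝ) * (1 + 1 / r) ^ 2 ≤ n :=
  rate_bound_t3_general C hk hr2 hC
end

section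
/- Fix integers r ≥ 2 and t ≥ 1, and let m be any integer with t ≤ 2^m − 1. Let C_t^{(m)} be the binary linear code with parity check matrix H_t^{(m)}. Then C_t^{(m)} is an (n, k, r, t)-SLRC with length n = |Ω_t^{(m)}| = r^m · Σ_{s=0}^{t} r^{−|supp_m(s)|} and dimension k = r^m; hence its rate is k/n = 1 / (Σ_{s=0}^{t} r^{−|supp_m(s)|}). -/
open Finset

/-- `supp_m(s)`: the support of the `m`-digit binary representation of `s`,
with digit `ℓ` (0-indexed) corresponding to `2^ℓ`. -/
def suppm (m s : ℕ) : Finset (Fin m) :=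
  Finset.univ.filter (fun ℓ => s.testBit ℓ.val)

/-- `U(α) = {ℓ ∈ [m] : α_ℓ = r}`, for `α ∈ Z_{r+1}^m`. -/
def Uset (r m : ℕ) (α : Fin m → Fin (r + 1)) : Finset (Fin m) :=
  Finset.univ.filter (fun ℓ => (α ℓ : ℕ) = r)

/-- `L(α) = {β ∈ Z_r^m : β_ℓ = α_ℓ for all ℓ with α_ℓ < r}`, with
`Z_r ⊆ Z_{r+1}` viewed as the elements of value `< r`. -/
def Lset (r m : ℕ) (α : Fin m → Fin (r + 1)) : Finset (Fin m → Fin (r + 1)) :=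
  Finset.univ.filter (fun β =>
    (∀ ℓ, (β ℓ : ℕ) < r) ∧ ∀ ℓ, (α ℓ : ℕ) < r → β ℓ = α ℓ)

/-- `Γ_s = {α ∈ Z_{r+1}^m : U(α) = supp_m(s)}`. -/
def Gam (r m s : ℕ) : Finset (Fin m → Fin (r + 1)) :=
  Finset.univ.filter (fun α => Uset r m α = suppm m s)

/-- `Ω_t^{(m)} = ⋃_{s=0}^{t} Γ_s`. -/
def Omeg (r m t : ℕ) : Finset (Fin m → Fin (r + 1)) :=
  (Finset.range (t + 1)).biUnion (Gam r m)

/-- The coordinate index set `Ω_t^{(m)}` as a type. -/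
abbrev OmegIdx (r m t : ℕ) : Type := {α : Fin m → Fin (r + 1) // α ∈ Omeg r m t}

/-- The columns of the row of `H_t^{(m)}` indexed by `α`, other than `α` itself:
the coordinates in `Ω_t^{(m)}` whose index lies in `L(α)`. -/
def LIdx (r m t : ℕ) (α : Fin m → Fin (r + 1)) : Finset (OmegIdx r m t) :=
  Finset.univ.filter (fun β => β.1 ∈ Lset r m α)

/-- The binary code `C_t^{(m)}` with parity check matrix `H_t^{(m)}`: the codewords
are exactly the `x` with `x_α = ∑_{β ∈ L(α)} x_β` for all `α ∈ Ω_t^{(m)} \ Ω_0^{(m)}`. -/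
def CodeC (r m t : ℕ) : Submodule (ZMod 2) (OmegIdx r m t → ZMod 2) where
  carrier := {x | ∀ α : OmegIdx r m t, α.1 ∉ Omeg r m 0 →
    x α = ∑ β ∈ LIdx r m t α.1, x β}
  add_mem' := by
    intro a b ha hb α hα
    simp only [Pi.add_apply, ha α hα, hb α hα, Finset.sum_add_distrib]
  zero_mem' := by
    intro α hα
    simp
  smul_mem' := by
    intro c x hx α hα
    simp only [Pi.smul_apply, smul_eq_mul, hx α hα, Finset.mul_sum]

/-!
Let `level α = ∑_{ℓ ∈ U(α)} 2^ℓ`, so that `α ∈ Γ_s` iff `level α = s` and `Ω_t` is the set of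
points of level at most `t`. A codeword is determined by its values on `Ω_0`, through
`x_α = ∑_{β ∈ L(α)} x_β`, which gives `k = |Ω_0| = r^m`. Since `L(α[ℓ := r])` is the disjoint
union of the `L(α[ℓ := j])`, `j < r`, every line `{α[ℓ := j] : j ≤ r}` has even weight, so when
the line lies in `Ω_t` each of its points is recovered from the `r` others.

Erasures are repaired one at a time, so it suffices that every erasure set `E` with `|E| ≤ t`
has a point whose line in some direction lies in `Ω_t` and meets `E` only in that point. If not,
`E` is a stopping set; splitting `E` by the value of its last coordinate and inducting on the
number of coordinates shows that a nonempty stopping set has more than `t` points.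
-/

open Function

theorem isSLRC_of_exists_recoverable {F ι : Type*} [Field F] [Fintype ι] [DecidableEq ι]
    {C : Submodule F (ι → F)} {r t : ℕ}
    (h : ∀ E : Finset ι, E.card ≤ t → E.Nonempty →
      ∃ i ∈ E, ∃ R, IsRecoveringSet C i R ∧ R.card ≤ r ∧ Disjoint R E) :
    IsSLRC C r t := by
  intro E hE
  induction E using Finset.strongInduction with
  | H E ih =>
  rcases E.eq_empty_or_nonempty with rfl | hne
  · exact ⟨[], List.nodup_nil, rfl, fun ℓ => ℓ.elim0⟩
  obtain ⟨i, hi, R, hR, hRcard, hRE⟩ := h E hE hne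
  obtain ⟨L, hLnd, hLE, hL⟩ :=
    ih (E.erase i) (Finset.erase_ssubset hi) ((Finset.card_erase_le).trans hE)
  have hiL : i ∉ L := fun hiL => by simpa [hLE] using List.mem_toFinset.2 hiL
  refine ⟨i :: L, List.nodup_cons.2 ⟨hiL, hLnd⟩,
    by rw [List.toFinset_cons, hLE, Finset.insert_erase hi], Fin.cases ⟨R, hR, hRcard, ?_⟩
    fun ℓ => ?_⟩
  · exact fun j hj => Finset.mem_union_left _ (Finset.mem_compl.2 (Finset.disjoint_left.1 hRE hj))
  · obtain ⟨R', hR', hR'card, hR'sub⟩ := hL ℓ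
    refine ⟨R', hR', hR'card, hR'sub.trans fun j => ?_⟩
    simp only [Finset.mem_union, Finset.mem_compl, Finset.mem_erase, List.mem_toFinset,
      Fin.val_succ, List.take_succ_cons, List.mem_cons]
    tauto

theorem sum_two_pow_val {m : ℕ} (S : Finset (Fin m)) :
    ∑ i ∈ S, 2 ^ (i : ℕ) = ∑ i ∈ S.map Fin.valEmbedding, 2 ^ i := by
  simp

theorem suppm_sum_two_pow {m : ℕ} (S : Finset (Fin m)) :
    suppm m (∑ i ∈ S, 2 ^ (i : ℕ)) = S := by
  ext ℓ
  rw [suppm, Finset.mem_filter, sum_two_pow_val, ← Nat.mem_bitIndices, ← List.mem_toFinset,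
    Finset.toFinset_bitIndices_sum_two_pow]
  simp [Fin.val_inj]

theorem sum_two_pow_suppm {m s : ℕ} (hs : s < 2 ^ m) : ∑ i ∈ suppm m s, 2 ^ (i : ℕ) = s := by
  have hmap : (suppm m s).map Fin.valEmbedding = s.bitIndices.toFinset := by
    ext i
    simp only [suppm, Finset.mem_map, Finset.mem_filter, Finset.mem_univ, true_and,
      Fin.valEmbedding_apply, List.mem_toFinset, Nat.mem_bitIndices]
    refine ⟨by rintro ⟨ℓ, h, rfl⟩; exact h, fun h => ⟨⟨i, ?_⟩, h, rfl⟩⟩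
    exact (Nat.pow_lt_pow_iff_right (by norm_num)).1 ((Nat.ge_two_pow_of_testBit h).trans_lt hs)
  rw [sum_two_pow_val, hmap, Finset.sum_toFinset_bitIndices_two_pow]

section Level

variable {r m : ℕ}

theorem mem_Uset {α : Fin m → Fin (r + 1)} {ℓ : Fin m} : ℓ ∈ Uset r m α ↔ α ℓ = Fin.last r := by
  simp [Uset, Fin.ext_iff]

-- `level m α` is the `s` with `α ∈ Γ_s`; counting only the coordinates below `k` lets the
-- stopping-set bound below be proved by induction on `k`.
def level (k : ℕ) (α : Fin m → Fin (r + 1)) : ℕ :=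
  ∑ ℓ ∈ (Uset r m α).filter (fun ℓ : Fin m => (ℓ : ℕ) < k), 2 ^ (ℓ : ℕ)

theorem level_eq_sum_Uset (α : Fin m → Fin (r + 1)) :
    level m α = ∑ ℓ ∈ Uset r m α, 2 ^ (ℓ : ℕ) := by
  rw [level, Finset.filter_true_of_mem fun ℓ _ => ℓ.isLt]

theorem level_lt_two_pow (k : ℕ) (α : Fin m → Fin (r + 1)) : level k α < 2 ^ k := by
  rw [level, sum_two_pow_val]
  exact Nat.geomSum_lt le_rfl fun i hi => by simp at hi; omega

theorem level_mono {k : ℕ} {α β : Fin m → Fin (r + 1)} (h : Uset r m α ⊆ Uset r m β) :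
    level k α ≤ level k β :=
  Finset.sum_le_sum_of_subset (Finset.filter_subset_filter _ h)

theorem level_update_last {k : ℕ} {α : Fin m → Fin (r + 1)} {ℓ : Fin m} (hℓ : (ℓ : ℕ) < k)
    (hα : α ℓ ≠ Fin.last r) :
    level k (update α ℓ (Fin.last r)) = level k α + 2 ^ (ℓ : ℕ) := by
  have hU : (Uset r m (update α ℓ (Fin.last r))).filter (fun i : Fin m => (i : ℕ) < k) =
      insert ℓ ((Uset r m α).filter (fun i : Fin m => (i : ℕ) < k)) := by
    ext i
    by_cases hi : i = ℓ
    · subst hi; simp [mem_Uset, hℓ]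
    · simp [mem_Uset, hi]
  rw [level, hU, Finset.sum_insert (by simp [mem_Uset, hα]), level, add_comm]

theorem level_succ {k : ℕ} (α : Fin m → Fin (r + 1)) {ℓ : Fin m} (hℓ : (ℓ : ℕ) = k) :
    level (k + 1) α = level k α + if α ℓ = Fin.last r then 2 ^ k else 0 := by
  have hsplit : ∀ i : Fin m, (if (i : ℕ) < k + 1 then 2 ^ (i : ℕ) else 0) =
      (if (i : ℕ) < k then 2 ^ (i : ℕ) else 0) + if ℓ = i then 2 ^ (i : ℕ) else 0 := by
    intro i
    have := Fin.val_inj (a := ℓ) (b := i)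
    split_ifs <;> omega
  simp only [level, Finset.sum_filter, hsplit, Finset.sum_add_distrib, Finset.sum_ite_eq,
    mem_Uset, hℓ]

theorem mem_Gam_iff {s : ℕ} (hs : s < 2 ^ m) (α : Fin m → Fin (r + 1)) :
    α ∈ Gam r m s ↔ level m α = s := by
  rw [Gam, Finset.mem_filter, level_eq_sum_Uset]
  refine ⟨fun h => by rw [h.2, sum_two_pow_suppm hs], fun h => ⟨Finset.mem_univ α, ?_⟩⟩
  rw [← h, suppm_sum_two_pow]

theorem mem_Omeg_iff {t : ℕ} (ht : t < 2 ^ m) (α : Fin m → Fin (r + 1)) :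
    α ∈ Omeg r m t ↔ level m α ≤ t := by
  simp only [Omeg, Finset.mem_biUnion, Finset.mem_range]
  constructor
  · rintro ⟨s, hs, h⟩
    rw [(mem_Gam_iff (by omega) α).1 h]
    omega
  · exact fun h => ⟨level m α, by omega, (mem_Gam_iff (by omega) α).2 rfl⟩

theorem mem_Omeg_zero_iff (α : Fin m → Fin (r + 1)) :
    α ∈ Omeg r m 0 ↔ ∀ ℓ, (α ℓ : ℕ) < r := by
  simp only [Omeg, Gam, suppm, Uset, zero_add, Finset.range_one, Finset.singleton_biUnion,
    Nat.zero_testBit, Finset.mem_filter, Finset.mem_univ, true_and, Finset.filter_false,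
    Finset.filter_eq_empty_iff, Bool.false_eq_true, forall_const]
  exact forall_congr' fun ℓ => by have := (α ℓ).is_le; omega

theorem Omeg_mono {s t : ℕ} (h : s ≤ t) : Omeg r m s ⊆ Omeg r m t :=
  Finset.biUnion_subset_biUnion_of_subset_left _ (Finset.range_subset_range.2 (by omega))

theorem update_mem_Omeg {t : ℕ} (ht : t < 2 ^ m) {α : Fin m → Fin (r + 1)} {ℓ : Fin m}
    (hα : update α ℓ (Fin.last r) ∈ Omeg r m t) (j : Fin (r + 1)) :
    update α ℓ j ∈ Omeg r m t := by
  rw [mem_Omeg_iff ht] at hα ⊢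
  refine (level_mono fun i hi => ?_).trans hα
  by_cases h : i = ℓ
  · subst h; simp [mem_Uset]
  · simpa [mem_Uset, h] using hi

theorem Gam_eq_piFinset (s : ℕ) :
    Gam r m s = Fintype.piFinset fun ℓ =>
      if ℓ ∈ suppm m s then {Fin.last r} else Finset.univ.erase (Fin.last r) := by
  ext α
  simp only [Gam, Finset.mem_filter, Finset.mem_univ, true_and, Fintype.mem_piFinset,
    Finset.ext_iff, mem_Uset]
  refine forall_congr' fun ℓ => ?_
  split_ifs with h <;> simp [h]

theorem card_Gam (s : ℕ) : (Gam r m s).card = r ^ (m - (suppm m s).card) := by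
  rw [Gam_eq_piFinset, Fintype.card_piFinset]
  simp [apply_ite Finset.card, Finset.prod_ite, Finset.filter_notMem_eq_sdiff,
    Finset.card_sdiff_of_subset]

theorem card_Omeg {t : ℕ} (ht : t < 2 ^ m) :
    (Omeg r m t).card = ∑ s ∈ Finset.range (t + 1), r ^ (m - (suppm m s).card) := by
  rw [Omeg, Finset.card_biUnion]
  · exact Finset.sum_congr rfl fun s _ => card_Gam s
  · intro s hs s' hs' hne
    simp only [Finset.coe_range, Set.mem_Iio] at hs hs'
    refine Finset.disjoint_left.2 fun α h h' => hne ?_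
    rw [← (mem_Gam_iff (by omega) α).1 h, (mem_Gam_iff (by omega) α).1 h']

theorem card_Omeg_zero : (Omeg r m 0).card = r ^ m := by
  simp [card_Omeg (Nat.two_pow_pos m), suppm]

end Level

section Encoder

variable {r m : ℕ}

theorem Lset_eq_singleton {β : Fin m → Fin (r + 1)} (h : ∀ ℓ, (β ℓ : ℕ) < r) :
    Lset r m β = {β} := by
  ext γ
  simp only [Lset, Finset.mem_filter, Finset.mem_univ, true_and, Finset.mem_singleton]
  exact ⟨fun hγ => funext fun ℓ => hγ.2 ℓ (h ℓ), by rintro rfl; exact ⟨h, fun _ _ => rfl⟩⟩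

theorem mem_Lset_update_last {α β : Fin m → Fin (r + 1)} {ℓ : Fin m} :
    β ∈ Lset r m (update α ℓ (Fin.last r)) ↔
      ∃ j : Fin r, β ∈ Lset r m (update α ℓ j.castSucc) := by
  simp only [Lset, Finset.mem_filter, Finset.mem_univ, true_and]
  constructor
  · rintro ⟨hβ, hα⟩
    refine ⟨⟨β ℓ, hβ ℓ⟩, hβ, fun i hi => ?_⟩
    by_cases h : i = ℓ
    · subst h; simp
    · rw [update_of_ne h] at hi ⊢
      simpa [update_of_ne h, hi] using hα i
  · rintro ⟨j, hβ, hα⟩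
    refine ⟨hβ, fun i hi => ?_⟩
    by_cases h : i = ℓ
    · subst h; simp at hi
    · rw [update_of_ne h] at hi ⊢
      simpa [update_of_ne h, hi] using hα i

def encodeAt {M : Type*} [AddCommMonoid M] (y : OmegIdx r m 0 → M)
    (α : Fin m → Fin (r + 1)) : M :=
  ∑ β ∈ LIdx r m 0 α, y β

theorem encodeAt_of_mem_Omeg_zero {M : Type*} [AddCommMonoid M] (y : OmegIdx r m 0 → M)
    {β : Fin m → Fin (r + 1)} (h : β ∈ Omeg r m 0) : encodeAt y β = y ⟨β, h⟩ := by
  have : LIdx r m 0 β = {⟨β, h⟩} := by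
    ext γ
    simp [LIdx, Lset_eq_singleton ((mem_Omeg_zero_iff β).1 h), Subtype.ext_iff]
  rw [encodeAt, this, Finset.sum_singleton]

theorem encodeAt_update_last {M : Type*} [AddCommMonoid M] (y : OmegIdx r m 0 → M)
    (α : Fin m → Fin (r + 1)) (ℓ : Fin m) :
    encodeAt y (update α ℓ (Fin.last r)) = ∑ j : Fin r, encodeAt y (update α ℓ j.castSucc) := by
  have hdisj : (Set.univ : Set (Fin r)).PairwiseDisjoint
      fun j => LIdx r m 0 (update α ℓ j.castSucc) := by
    intro a _ b _ hab
    refine Finset.disjoint_left.2 fun β ha hb => hab (Fin.castSucc_injective r ?_)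
    simp only [LIdx, Lset, Finset.mem_filter, Finset.mem_univ, true_and] at ha hb
    have ha' := ha.2 ℓ (by simp)
    have hb' := hb.2 ℓ (by simp)
    simp only [update_self] at ha' hb'
    rw [← ha', ← hb']
  simp only [encodeAt]
  rw [← Finset.sum_biUnion (by simpa using hdisj)]
  congr 1
  ext β
  simp [LIdx, mem_Lset_update_last]

theorem sum_encodeAt_line (y : OmegIdx r m 0 → ZMod 2) (α : Fin m → Fin (r + 1)) (ℓ : Fin m) :
    ∑ j, encodeAt y (update α ℓ j) = 0 := by
  rw [Fin.sum_univ_castSucc, ← encodeAt_update_last, CharTwo.add_self_eq_zero]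

theorem encodeAt_eq_sum_line_erase (y : OmegIdx r m 0 → ZMod 2) (α : Fin m → Fin (r + 1))
    (ℓ : Fin m) :
    encodeAt y α = ∑ j ∈ Finset.univ.erase (α ℓ), encodeAt y (update α ℓ j) := by
  have h := sum_encodeAt_line y α ℓ
  rwa [← Finset.add_sum_erase _ _ (Finset.mem_univ (α ℓ)), update_eq_self,
    CharTwo.add_eq_zero] at h

variable (t : ℕ)

def inclOmegZero : OmegIdx r m 0 ↪ OmegIdx r m t :=
  Subtype.impEmbedding _ _ fun _ h => Omeg_mono (Nat.zero_le t) h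

theorem LIdx_eq_map (α : Fin m → Fin (r + 1)) :
    LIdx r m t α = (LIdx r m 0 α).map (inclOmegZero t) := by
  ext γ
  simp only [LIdx, Finset.mem_filter, Finset.mem_univ, true_and, Finset.mem_map]
  refine ⟨fun h => ⟨⟨γ.1, ?_⟩, h, rfl⟩, by rintro ⟨β, hβ, rfl⟩; exact hβ⟩
  simp only [Lset, Finset.mem_filter, Finset.mem_univ, true_and] at h
  exact (mem_Omeg_zero_iff _).2 h.1

def encoder : (OmegIdx r m 0 → ZMod 2) →ₗ[ZMod 2] (OmegIdx r m t → ZMod 2) where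
  toFun y α := encodeAt y α.1
  map_add' y z := by ext; simp [encodeAt, Finset.sum_add_distrib]
  map_smul' c y := by ext; simp [encodeAt, Finset.mul_sum]

theorem eq_encodeAt_of_mem {x : OmegIdx r m t → ZMod 2} (hx : x ∈ CodeC r m t)
    (α : OmegIdx r m t) : x α = encodeAt (x ∘ inclOmegZero t) α.1 := by
  by_cases h0 : α.1 ∈ Omeg r m 0
  · rw [encodeAt_of_mem_Omeg_zero _ h0]
    rfl
  · rw [hx α h0, LIdx_eq_map, Finset.sum_map]
    rfl

theorem range_encoder : LinearMap.range (encoder t) = CodeC r m t := by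
  refine le_antisymm ?_ fun x hx =>
    ⟨x ∘ inclOmegZero t, funext fun α => (eq_encodeAt_of_mem t hx α).symm⟩
  rintro _ ⟨y, rfl⟩ α -
  change encodeAt y α.1 = ∑ γ ∈ LIdx r m t α.1, encodeAt y γ.1
  rw [LIdx_eq_map, Finset.sum_map]
  exact Finset.sum_congr rfl fun β _ => (encodeAt_of_mem_Omeg_zero y β.2).symm

theorem encoder_injective : Injective (encoder (r := r) (m := m) t) := by
  intro y z h
  funext β
  have hβ : encodeAt y β.1 = encodeAt z β.1 := congrFun h (inclOmegZero t β)
  rwa [encodeAt_of_mem_Omeg_zero _ β.2, encodeAt_of_mem_Omeg_zero _ β.2] at hβ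

theorem finrank_CodeC : Module.finrank (ZMod 2) (CodeC r m t) = r ^ m := by
  rw [← range_encoder, LinearMap.finrank_range_of_inj (encoder_injective t),
    Module.finrank_fintype_fun_eq_card, Fintype.card_coe, card_Omeg_zero]

end Encoder

section StoppingSet

variable {r m : ℕ}

def IsStoppingSet (k t : ℕ) (E : Finset (Fin m → Fin (r + 1))) : Prop :=
  ∀ α ∈ E, level k α ≤ t ∧ ∀ ℓ : Fin m, (ℓ : ℕ) < k →
    level k (update α ℓ (Fin.last r)) ≤ t → ∃ j ≠ α ℓ, update α ℓ j ∈ E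

namespace IsStoppingSet

variable {k t : ℕ} {E : Finset (Fin m → Fin (r + 1))}

theorem exists_level_eq_zero (hE : IsStoppingSet k t E) (hne : E.Nonempty) :
    ∃ β ∈ E, level k β = 0 := by
  obtain ⟨β, hβE, hmin⟩ := E.exists_min_image (level k) hne
  refine ⟨β, hβE, by_contra fun hβ => ?_⟩
  obtain ⟨ℓ, hℓ⟩ := Finset.nonempty_of_sum_ne_zero hβ
  rw [Finset.mem_filter, mem_Uset] at hℓ
  have hadm : level k (update β ℓ (Fin.last r)) ≤ t := by
    rw [← hℓ.1, update_eq_self]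
    exact (hE β hβE).1
  obtain ⟨j, hj, hγE⟩ := (hE β hβE).2 ℓ hℓ.2 hadm
  -- raising coordinate `ℓ` of the neighbour back to `r` recovers `β`, at the cost of `2 ^ ℓ`
  have hγ := level_update_last (α := update β ℓ j) hℓ.2 (by rwa [update_self, ← hℓ.1])
  rw [update_idem, ← hℓ.1, update_eq_self] at hγ
  have := hmin _ hγE
  have := Nat.two_pow_pos (ℓ : ℕ)
  omega

-- The cap `2 ^ k - 1` bounds `level k` anyway; it keeps the threshold below `2 ^ k`.
theorem filter_apply_eq (hE : IsStoppingSet (k + 1) t E) {ℓ₀ : Fin m} (hℓ₀ : (ℓ₀ : ℕ) = k)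
    (c : Fin (r + 1)) :
    IsStoppingSet k (min (t - if c = Fin.last r then 2 ^ k else 0) (2 ^ k - 1))
      (E.filter fun α => α ℓ₀ = c) := by
  intro α hα
  rw [Finset.mem_filter] at hα
  obtain ⟨hαE, hαc⟩ := hα
  have hlev := (hE α hαE).1
  rw [level_succ α hℓ₀, hαc] at hlev
  have := level_lt_two_pow k α
  refine ⟨by omega, fun ℓ hℓ hadm => ?_⟩
  have hne : ℓ₀ ≠ ℓ := fun h => by omega
  have hadm' : level (k + 1) (update α ℓ (Fin.last r)) ≤ t := by
    rw [level_succ _ hℓ₀, update_of_ne hne, hαc]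
    omega
  obtain ⟨j, hj, hjE⟩ := (hE α hαE).2 ℓ (by omega) hadm'
  exact ⟨j, hj, Finset.mem_filter.2 ⟨hjE, by rw [update_of_ne hne, hαc]⟩⟩

theorem lt_card (hk : k ≤ m) (ht : t < 2 ^ k) (hE : IsStoppingSet k t E) (hne : E.Nonempty) :
    t < E.card := by
  induction k generalizing t E with
  | zero => simpa [Nat.lt_one_iff.1 ht] using hne
  | succ k ih =>
  obtain ⟨ℓ₀, hℓ₀⟩ : ∃ ℓ₀ : Fin m, (ℓ₀ : ℕ) = k := ⟨⟨k, hk⟩, rfl⟩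
  have hslice : ∀ c, (E.filter fun α => α ℓ₀ = c).Nonempty →
      min (t - if c = Fin.last r then 2 ^ k else 0) (2 ^ k - 1) <
        (E.filter fun α => α ℓ₀ = c).card := fun c hc =>
    ih (by omega) (by have := Nat.one_le_two_pow (n := k); omega)
      (hE.filter_apply_eq hℓ₀ c) hc
  obtain ⟨β, hβE, hβ⟩ := hE.exists_level_eq_zero hne
  rw [level_succ β hℓ₀] at hβ
  have hβℓ₀ : β ℓ₀ ≠ Fin.last r := fun h => by simp [h] at hβ
  simp only [hβℓ₀, if_false, add_zero] at hβ
  have hβslice := hslice (β ℓ₀) ⟨β, Finset.mem_filter.2 ⟨hβE, rfl⟩⟩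
  simp only [hβℓ₀, if_false, Nat.sub_zero] at hβslice
  by_cases hsmall : t < 2 ^ k
  · exact (lt_of_le_of_lt (by omega) hβslice).trans_le (Finset.card_filter_le _ _)
  -- `β` lies on a line in direction `ℓ₀` of level `2 ^ k ≤ t`, so a second slice is nonempty;
  -- the slice of `β` has at least `2 ^ k` points and the other one more than `t - 2 ^ k`
  have hadm : level (k + 1) (update β ℓ₀ (Fin.last r)) ≤ t := by
    rw [level_update_last (by omega) hβℓ₀, level_succ β hℓ₀, hβ, hℓ₀]
    simp only [hβℓ₀, if_false]
    omega
  obtain ⟨j, hj, hjE⟩ := (hE β hβE).2 ℓ₀ (by omega) hadm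
  have hjslice := hslice j ⟨_, Finset.mem_filter.2 ⟨hjE, update_self ..⟩⟩
  have hdisj : Disjoint (E.filter fun α => α ℓ₀ = β ℓ₀) (E.filter fun α => α ℓ₀ = j) :=
    Finset.disjoint_filter.2 fun α _ h h' => hj (h' ▸ h)
  have hunion := Finset.card_le_card <| Finset.union_subset
    (Finset.filter_subset (fun α => α ℓ₀ = β ℓ₀) E) (Finset.filter_subset (fun α => α ℓ₀ = j) E)
  rw [Finset.card_union_of_disjoint hdisj] at hunion
  have := pow_succ 2 k
  split_ifs at hjslice <;> omega

end IsStoppingSet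

end StoppingSet

section Repair

variable {r m t : ℕ}

theorem exists_recoveringSet_of_line {α : OmegIdx r m t} {ℓ : Fin m}
    (hline : ∀ j, update α.1 ℓ j ∈ Omeg r m t) :
    ∃ R : Finset (OmegIdx r m t), IsRecoveringSet (CodeC r m t) α R ∧ R.card = r ∧
      ∀ β ∈ R, ∃ j ≠ α.1 ℓ, β.1 = update α.1 ℓ j := by
  set f : Fin (r + 1) → OmegIdx r m t := fun j => ⟨update α.1 ℓ j, hline j⟩
  have hf : Injective f := fun a b h => by
    simpa [f] using congrArg (fun β : OmegIdx r m t => β.1 ℓ) h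
  refine ⟨(Finset.univ.erase (α.1 ℓ)).image f, ⟨?_, fun _ => 1, fun _ _ => one_ne_zero,
    fun x hx => ?_⟩, ?_, ?_⟩
  · simp only [Finset.mem_image, Finset.mem_erase, not_exists, not_and]
    rintro j ⟨hj, -⟩ h
    exact hj (by simpa [f] using congrArg (fun β : OmegIdx r m t => β.1 ℓ) h)
  · simp only [one_mul, Finset.sum_image hf.injOn, eq_encodeAt_of_mem t hx]
    exact encodeAt_eq_sum_line_erase _ _ ℓ
  · rw [Finset.card_image_of_injective _ hf, Finset.card_erase_of_mem (Finset.mem_univ _),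
      Finset.card_univ, Fintype.card_fin, Nat.add_sub_cancel]
  · simp only [Finset.mem_image, Finset.mem_erase]
    rintro _ ⟨j, ⟨hj, -⟩, rfl⟩
    exact ⟨j, hj, rfl⟩

theorem exists_mem_recoverable (ht : t < 2 ^ m) (E : Finset (OmegIdx r m t)) (hE : E.card ≤ t)
    (hne : E.Nonempty) :
    ∃ α ∈ E, ∃ R, IsRecoveringSet (CodeC r m t) α R ∧ R.card ≤ r ∧ Disjoint R E := by
  obtain ⟨_, hα, ℓ, hℓ, hfree⟩ : ∃ α ∈ E.image Subtype.val, ∃ ℓ : Fin m,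
      level m (update α ℓ (Fin.last r)) ≤ t ∧ ∀ j ≠ α ℓ, update α ℓ j ∉ E.image Subtype.val := by
    by_contra! h
    have hstop : IsStoppingSet m t (E.image Subtype.val) := fun α hα => by
      obtain ⟨a, -, rfl⟩ := Finset.mem_image.1 hα
      exact ⟨(mem_Omeg_iff ht _).1 a.2, fun ℓ _ => h a.1 hα ℓ⟩
    have := hstop.lt_card le_rfl ht (hne.image _)
    rw [Finset.card_image_of_injective _ Subtype.val_injective] at this
    omega
  obtain ⟨α, hαE, rfl⟩ := Finset.mem_image.1 hα
  obtain ⟨R, hR, hRcard, hRline⟩ :=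
    exists_recoveringSet_of_line (update_mem_Omeg ht ((mem_Omeg_iff ht _).2 hℓ))
  refine ⟨α, hαE, R, hR, hRcard.le, Finset.disjoint_left.2 fun β hβR hβE => ?_⟩
  obtain ⟨j, hj, hβ⟩ := hRline β hβR
  exact hfree j hj (hβ ▸ Finset.mem_image_of_mem _ hβE)

end Repair

theorem pow_div_card_OmegIdx {r m t : ℕ} (hr : r ≠ 0) (ht : t < 2 ^ m) :
    ((r : ℚ) ^ m) / (Fintype.card (OmegIdx r m t)) =
      (∑ s ∈ Finset.range (t + 1), ((r : ℚ) ^ (suppm m s).card)⁻¹)⁻¹ := by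
  have hr' : (r : ℚ) ≠ 0 := Nat.cast_ne_zero.2 hr
  have hsum : ∑ s ∈ Finset.range (t + 1), ((r ^ (m - (suppm m s).card) : ℕ) : ℚ) =
      (r : ℚ) ^ m * ∑ s ∈ Finset.range (t + 1), ((r : ℚ) ^ (suppm m s).card)⁻¹ := by
    rw [Finset.mul_sum]
    refine Finset.sum_congr rfl fun s _ => ?_
    rw [Nat.cast_pow, pow_sub₀ _ hr' ((Finset.card_le_univ _).trans_eq (Fintype.card_fin m))]
  rw [Fintype.card_coe, card_Omeg ht, Nat.cast_sum, hsum,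
    div_mul_cancel_left₀ (pow_ne_zero m hr')]

theorem codeC_is_SLRC_general (r m t : ℕ) (hr : 2 ≤ r) (ht2 : t ≤ 2 ^ m - 1) :
    IsSLRC (CodeC r m t) r t ∧
    Fintype.card (OmegIdx r m t) = ∑ s ∈ Finset.range (t + 1), r ^ (m - (suppm m s).card) ∧
    Module.finrank (ZMod 2) (CodeC r m t) = r ^ m ∧
    ((r : ℚ) ^ m) / (Fintype.card (OmegIdx r m t)) =
      (∑ s ∈ Finset.range (t + 1), ((r : ℚ) ^ (suppm m s).card)⁻¹)⁻¹ := by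
  have ht : t < 2 ^ m := by have := Nat.one_le_two_pow (n := m); omega
  exact ⟨isSLRC_of_exists_recoverable (exists_mem_recoverable ht),
    (Fintype.card_coe _).trans (card_Omeg ht), finrank_CodeC t,
    pow_div_card_OmegIdx (by omega) ht⟩

/-- Theorem 2: `C_t^{(m)}` is an `(n, k, r, t)`-SLRC with
`n = |Ω_t^{(m)}| = ∑_{s=0}^{t} r^{m - |supp_m(s)|}` and `k = r^m`; hence its rate is
`k/n = 1 / ∑_{s=0}^{t} r^{-|supp_m(s)|}`. -/
theorem codeC_is_SLRC (r m t : ℕ) (hr : 2 ≤ r) (ht1 : 1 ≤ t) (ht2 : t ≤ 2 ^ m - 1) :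
    IsSLRC (CodeC r m t) r t ∧
    Fintype.card (OmegIdx r m t) = ∑ s ∈ Finset.range (t + 1), r ^ (m - (suppm m s).card) ∧
    Module.finrank (ZMod 2) (CodeC r m t) = r ^ m ∧
    ((r : ℚ) ^ m) / (Fintype.card (OmegIdx r m t)) =
      (∑ s ∈ Finset.range (t + 1), ((r : ℚ) ^ (suppm m s).card)⁻¹)⁻¹ :=
  codeC_is_SLRC_general r m t hr ht2
end

section
/- For any integers r ≥ 2 and t ≥ 2, and any integer m with m ≥ log_2 t (equivalently 2^m ≥ t), there exists a (k_{t−1}, b_r) resolvable configuration with k = r^m points (and hence b = (t−1)·r^{m−1} lines). -/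
open Finset

/-- `(X, A)` (with `|X| = k` and lines `A : Fin b → Finset X`) is a `(k_{t-1}, b_r)`
resolvable configuration: each line has exactly `r` points, each point is on exactly
`t - 1` lines, any two distinct points are on at most one common line, and the lines
can be partitioned into `t - 1` parallel classes, each of which partitions `X`. -/
def IsResolvableConfig (k t b r : ℕ) {X : Type*} [Fintype X] [DecidableEq X]
    (A : Fin b → Finset X) : Prop :=
  Fintype.card X = k ∧
  (∀ i, (A i).card = r) ∧
  (∀ x : X, (Finset.univ.filter (fun i => x ∈ A i)).card = t - 1) ∧
  (∀ x y : X, x ≠ y → (Finset.univ.filter (fun i => x ∈ A i ∧ y ∈ A i)).card ≤ 1) ∧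
  (∃ c : Fin b → Fin (t - 1), ∀ ℓ : Fin (t - 1), ∀ x : X, ∃! i, c i = ℓ ∧ x ∈ A i)


section Aux

variable {r n : ℕ} [NeZero r]

/-- directions: nonzero 0/1 vectors encoded as boolean tuples -/
abbrev Dir (n : ℕ) := {s : Fin (n + 1) → Bool // ∃ j, s j = true}

noncomputable def idx0 (d : Dir n) : Fin (n + 1) := d.2.choose

lemma idx0_spec (d : Dir n) : d.1 (idx0 d) = true := d.2.choose_spec

def dvec (r : ℕ) (d : Dir n) : Fin (n + 1) → ZMod r := fun i => if d.1 i then 1 else 0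

lemma dvec_idx0 (d : Dir n) : dvec r d (idx0 d) = 1 := by simp [dvec, idx0_spec]

noncomputable def rho (d : Dir n) (x : Fin (n + 1) → ZMod r) : Fin (n + 1) → ZMod r :=
  fun i => x i - x (idx0 d) * dvec r d i

noncomputable def Line (d : Dir n) (w : Fin n → ZMod r) : Finset (Fin (n + 1) → ZMod r) :=
  univ.filter (fun x => rho d x = Fin.insertNth (idx0 d) 0 w)

lemma mem_Line {d : Dir n} {w : Fin n → ZMod r} {x} :
    x ∈ Line d w ↔ rho d x = Fin.insertNth (idx0 d) 0 w := by simp [Line]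

lemma rho_idx0 (d : Dir n) (x : Fin (n + 1) → ZMod r) : rho d x (idx0 d) = 0 := by simp [rho, dvec_idx0]

lemma mem_Line_iff {d : Dir n} {w : Fin n → ZMod r} {x} :
    x ∈ Line d w ↔ w = Fin.removeNth (idx0 d) (rho d x) := by
  rw [mem_Line]
  constructor
  · intro h; rw [h]; simp
  · intro h
    rw [h, Fin.insertNth_removeNth]
    funext i
    rcases eq_or_ne i (idx0 d) with rfl | hne
    · rw [Function.update_self, rho_idx0]
    · rw [Function.update_of_ne hne]

lemma Line_eq_image (d : Dir n) (w : Fin n → ZMod r) :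
    Line d w = Finset.image
      (fun lam : ZMod r => Fin.insertNth (idx0 d) 0 w + lam • dvec r d) univ := by
  have hc0 : Fin.insertNth (α := fun _ => ZMod r) (idx0 d) 0 w (idx0 d) = 0 := by simp
  ext x
  simp only [mem_Line, Finset.mem_image, Finset.mem_univ, true_and]
  constructor
  · intro h
    refine ⟨x (idx0 d), funext fun i => ?_⟩
    have := congrFun h i
    simp only [rho] at this
    simp only [Pi.add_apply, Pi.smul_apply, smul_eq_mul]
    rw [← this]; ring
  · rintro ⟨lam, rfl⟩
    funext i
    simp only [rho, Pi.add_apply, Pi.smul_apply, smul_eq_mul, hc0, dvec_idx0]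
    ring

lemma Line_card (d : Dir n) (w : Fin n → ZMod r) : (Line d w).card = r := by
  rw [Line_eq_image, Finset.card_image_of_injective _ ?_, card_univ, ZMod.card]
  intro a b hab
  have := congrFun hab (idx0 d)
  simpa [Fin.insertNth_apply_same, dvec_idx0] using this

lemma dir_eq {d d' : Dir n} {w w' : Fin n → ZMod r} {x y : Fin (n + 1) → ZMod r}
    (hxy : x ≠ y) (hx : x ∈ Line d w) (hy : y ∈ Line d w)
    (hx' : x ∈ Line d' w') (hy' : y ∈ Line d' w') : d = d' := by
  rw [mem_Line] at hx hy hx' hy'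
  have key : ∀ (e : Dir n), rho e x = rho e y →
      (∀ i, y i - x i = (y (idx0 e) - x (idx0 e)) * dvec r e i) := by
    intro e he i
    have := congrFun he i
    simp only [rho] at this
    linear_combination -this
  have h1 := key d (hx.trans hy.symm)
  have h2 := key d' (hx'.trans hy'.symm)
  set a := y (idx0 d) - x (idx0 d) with ha
  set b := y (idx0 d') - x (idx0 d') with hb
  have hane : a ≠ 0 := by
    intro h0
    apply hxy
    funext i
    have := h1 i
    rw [h0, zero_mul, sub_eq_zero] at this
    exact this.symm
  have hbne : b ≠ 0 := by
    intro h0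
    apply hxy
    funext i
    have := h2 i
    rw [h0, zero_mul, sub_eq_zero] at this
    exact this.symm
  apply Subtype.ext
  funext i
  have h12 : a * dvec r d i = b * dvec r d' i := (h1 i).symm.trans (h2 i)
  by_cases hdi : d.1 i <;> by_cases hdi' : d'.1 i <;>
    simp [hdi, hdi', dvec] at h12 ⊢ <;> tauto

end Aux

/-- Lemma 9: for any `r, t ≥ 2` and any `m` with `2^m ≥ t`, there exists a
`(k_{t-1}, b_r)` resolvable configuration with `k = r^m` points (and hence
`b = (t-1)·r^{m-1}` lines). -/
theorem exists_resolvable_config (r t m : ℕ) (hr : 2 ≤ r) (ht : 2 ≤ t)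
    (hm : t ≤ 2 ^ m) :
    ∃ A : Fin ((t - 1) * r ^ (m - 1)) → Finset (Fin (r ^ m)),
      IsResolvableConfig (r ^ m) t ((t - 1) * r ^ (m - 1)) r A := by
  haveI : NeZero r := ⟨by omega⟩
  obtain ⟨n, rfl⟩ : ∃ n, m = n + 1 := by
    refine ⟨m - 1, ?_⟩
    rcases m with _ | m
    · simp at hm; omega
    · omega
  have hcardD : Fintype.card (Dir n) = 2 ^ (n + 1) - 1 := by
    rw [Fintype.card_subtype]
    have hset : (univ.filter fun s : Fin (n + 1) → Bool => ∃ j, s j = true)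
        = univ \ {fun _ => false} := by
      ext s
      simp only [mem_filter, mem_univ, true_and, mem_sdiff, mem_singleton]
      constructor
      · rintro ⟨j, hj⟩ h
        rw [funext_iff] at h
        simpa [h j] using hj
      · intro h
        by_contra hc
        push_neg at hc
        exact h (funext fun j => by simpa using hc j)
    rw [hset, Finset.card_sdiff_of_subset (by simp), card_univ]
    simp [Fintype.card_fun]
  obtain ⟨D⟩ : Nonempty (Fin (t - 1) ↪ Dir n) := by
    rw [Function.Embedding.nonempty_iff_card_le]
    rw [hcardD, Fintype.card_fin]
    omega
  have hV : Fintype.card (Fin (n + 1) → ZMod r) = r ^ (n + 1) := by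
    simp [ZMod.card]
  have hI : Fintype.card (Fin (t - 1) × (Fin n → ZMod r)) = (t - 1) * r ^ ((n + 1) - 1) := by
    simp [ZMod.card]
  let e : Fin (r ^ (n + 1)) ≃ (Fin (n + 1) → ZMod r) := (Fintype.equivFinOfCardEq hV).symm
  let f : Fin ((t - 1) * r ^ ((n + 1) - 1)) ≃ (Fin (t - 1) × (Fin n → ZMod r)) :=
    (Fintype.equivFinOfCardEq hI).symm
  set A : Fin ((t - 1) * r ^ ((n + 1) - 1)) → Finset (Fin (r ^ (n + 1))) :=
    fun i => (Line (D (f i).1) (f i).2).map e.symm.toEmbedding with hA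
  have hmem : ∀ (i) (x : Fin (r ^ (n + 1))),
      x ∈ A i ↔ e x ∈ Line (D (f i).1) (f i).2 := by
    intro i x
    rw [hA, Finset.mem_map_equiv]
    simp
  refine ⟨A, ?_, ?_, ?_, ?_, ?_⟩
  · simp
  · intro i
    rw [hA, Finset.card_map]
    exact Line_card _ _
  · intro x
    have himg : (univ.filter fun i => x ∈ A i)
        = Finset.image
            (fun ℓ : Fin (t - 1) =>
              f.symm (ℓ, Fin.removeNth (idx0 (D ℓ)) (rho (D ℓ) (e x)))) univ := by
      ext i
      simp only [mem_filter, mem_univ, true_and, mem_image]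
      rw [hmem, mem_Line_iff]
      constructor
      · intro h
        refine ⟨(f i).1, ?_⟩
        rw [← h]
        simp
      · rintro ⟨ℓ, rfl⟩
        simp
    rw [himg, Finset.card_image_of_injective _ ?_, card_univ, Fintype.card_fin]
    intro a b hab
    have := congrArg (fun i => (f i).1) hab
    simpa using this
  · intro x y hxy
    rw [Finset.card_le_one]
    intro i hi j hj
    simp only [mem_filter, mem_univ, true_and] at hi hj
    obtain ⟨hix, hiy⟩ := hi
    obtain ⟨hjx, hjy⟩ := hj
    rw [hmem] at hix hiy hjx hjy
    have hxy' : e x ≠ e y := fun h => hxy (e.injective h)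
    have hd : D (f i).1 = D (f j).1 := dir_eq hxy' hix hiy hjx hjy
    have hl : (f i).1 = (f j).1 := D.injective hd
    have hw : (f i).2 = (f j).2 := by
      rw [mem_Line_iff] at hix hjx
      rw [hix, hjx, hd]
    apply f.injective
    exact Prod.ext hl hw
  · refine ⟨fun i => (f i).1, fun ℓ x => ?_⟩
    refine ⟨f.symm (ℓ, Fin.removeNth (idx0 (D ℓ)) (rho (D ℓ) (e x))), ⟨?_, ?_⟩, ?_⟩
    · simp
    · rw [hmem]
      simp only [Equiv.apply_symm_apply]
      rw [mem_Line_iff]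
    · rintro i ⟨h1, h2⟩
      subst h1
      rw [hmem, mem_Line_iff] at h2
      rw [← h2]
      simp
end

section
/- Let (X, A) be a (k_{t−1}, b_r) resolvable configuration with X = [k], lines A = {A_1,…,A_b} ordered so that for each ℓ ∈ {1,…,t−1} the lines A_{(ℓ−1)s+1},…,A_{ℓs} form a parallel class, where s = k/r and b = s(t−1). Partition [s] into ⌈s/r⌉ nonempty subsets B_1,…,B_{⌈s/r⌉}, each of size at most r. Let M be the b×k incidence matrix of (X,A), let W be the ⌈s/r⌉×b binary matrix with w_{i,j} = 1 iff j ∈ B_i, and let H be the (b+⌈s/r⌉) × (k+b+⌈s/r⌉) binary block matrix H = [[M, I_b, 0], [0, W, I_{⌈s/r⌉}]]. If t is odd, then the binary linear code C with parity check matrix H is an (n, k, r, t)-SLRC with length n = k + b + ⌈s/r⌉ = k + (t−1)k/r + ⌈k/r²⌉ and dimension k; hence its rate is k/n = 1/(1 + (t−1)/r + ⌈k/r²⌉/k). -/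
/-!
Every row of `H` is a parity check, so each coordinate in its support is the sum of the others.
Hence it suffices to find, for erasures `E` with `|E| ≤ t`, one erased coordinate lying on a check
that meets `E` only there, and to recurse. If no point is erased, an erased line parity is
repaired from its points, or else an erased block parity from its lines. If some erased point
lies on a line whose parity and other points are intact, that line repairs it. Otherwise each of
the `t - 1` lines through an erased point is blocked, by its erased parity or by another erased
point; since the lines through a point meet pairwise only there, counting against `|E| ≤ t`
leaves no slack: no block parity is erased, every such line is blocked exactly once, and the
erased points and line parities number exactly `t`. An erased line parity would pass through
every erased point yet contain only one of them, so then a single point is erased; its line in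
the first parallel class has erased parity and is repaired through its block. If no line parity
is erased, the first parallel class pairs off the `t` erased points, contradicting that `t` is
odd.
-/

open Finset

/-- The binary code with parity check matrix `H = [[M, I_b, 0], [0, W, I_q]]`, where
`M` is the incidence matrix of the lines `A` and `W` the incidence matrix of the
blocks `B`: codewords are exactly the `x` with
`x_{k+i} = ∑_{j ∈ A i} x_j` for `i ∈ [b]` and
`x_{k+b+i} = ∑_{j ∈ B i} x_{k+j}` for `i ∈ [q]`. -/
def ConfigCode (k b q : ℕ) (A : Fin b → Finset (Fin k)) (B : Fin q → Finset (Fin b)) :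
    Submodule (ZMod 2) ((Fin k ⊕ Fin b ⊕ Fin q) → ZMod 2) where
  carrier := {x |
    (∀ i : Fin b, x (Sum.inr (Sum.inl i)) = ∑ j ∈ A i, x (Sum.inl j)) ∧
    (∀ i : Fin q, x (Sum.inr (Sum.inr i)) = ∑ j ∈ B i, x (Sum.inr (Sum.inl j)))}
  add_mem' := by
    rintro a b ⟨ha1, ha2⟩ ⟨hb1, hb2⟩
    constructor
    · intro i
      simp only [Pi.add_apply, ha1 i, hb1 i, Finset.sum_add_distrib]
    · intro i
      simp only [Pi.add_apply, ha2 i, hb2 i, Finset.sum_add_distrib]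
  zero_mem' := by
    constructor <;> intro i <;> simp
  smul_mem' := by
    rintro c x ⟨hx1, hx2⟩
    constructor
    · intro i
      simp only [Pi.smul_apply, smul_eq_mul, hx1 i, Finset.mul_sum]
    · intro i
      simp only [Pi.smul_apply, smul_eq_mul, hx2 i, Finset.mul_sum]

section Recovery

variable {F ι : Type*} [Field F] [Fintype ι] [DecidableEq ι]

def RecoverableFromCompl (C : Submodule F (ι → F)) (r : ℕ) (E : Finset ι) (i : ι) : Prop :=
  ∃ R, IsRecoveringSet C i R ∧ R.card ≤ r ∧ R ⊆ Eᶜ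

theorem isRecoveringSet_erase_of_sum_eq_zero {C : Submodule F (ι → F)} {S : Finset ι}
    (hS : ∀ x ∈ C, ∑ j ∈ S, x j = 0) {i : ι} (hi : i ∈ S) :
    IsRecoveringSet C i (S.erase i) := by
  refine ⟨notMem_erase i S, fun _ => -1, fun _ _ => neg_ne_zero.mpr one_ne_zero, fun x hx => ?_⟩
  have h := hS x hx
  rw [← add_sum_erase S _ hi] at h
  simp only [neg_one_mul, sum_neg_distrib]
  linear_combination h

theorem recoverableFromCompl_of_sum_eq_zero {C : Submodule F (ι → F)} {S E : Finset ι} {r : ℕ}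
    (hS : ∀ x ∈ C, ∑ j ∈ S, x j = 0) (hcard : S.card ≤ r + 1) {i : ι} (hi : i ∈ S)
    (hSE : ∀ j ∈ S, j ∈ E → j = i) : RecoverableFromCompl C r E i := by
  refine ⟨S.erase i, isRecoveringSet_erase_of_sum_eq_zero hS hi, ?_, fun j hj => ?_⟩
  · rw [card_erase_of_mem hi]
    omega
  · obtain ⟨hji, hjS⟩ := mem_erase.mp hj
    exact mem_compl.mpr fun hjE => hji (hSE j hjS hjE)

theorem isSLRC_of_forall_exists_recoverable {C : Submodule F (ι → F)} {r t : ℕ}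
    (h : ∀ E : Finset ι, E.Nonempty → E.card ≤ t → ∃ i ∈ E, RecoverableFromCompl C r E i) :
    IsSLRC C r t := by
  intro E
  induction E using Finset.strongInduction with
  | H E ih =>
  intro hE
  rcases E.eq_empty_or_nonempty with rfl | hne
  · exact ⟨[], List.nodup_nil, rfl, fun ℓ => ℓ.elim0⟩
  obtain ⟨i, hi, R, hR, hRr, hRE⟩ := h E hne hE
  obtain ⟨L, hnd, hLE, hL⟩ := ih (E.erase i) (erase_ssubset hi) ((card_erase_le).trans hE)
  have hiL : i ∉ L := fun h => by simpa [hLE] using List.mem_toFinset.mpr h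
  refine ⟨i :: L, List.nodup_cons.mpr ⟨hiL, hnd⟩, by simp [hLE, insert_erase hi], ?_⟩
  refine Fin.cases ⟨R, hR, hRr, hRE.trans subset_union_left⟩ fun m => ?_
  obtain ⟨R', hR', hR'r, hR'E⟩ := hL m
  refine ⟨R', hR', hR'r, hR'E.trans ?_⟩
  rw [compl_erase]
  intro j
  simp only [List.length_cons, Fin.val_succ, List.take_succ_cons, List.toFinset_cons, mem_union,
    mem_insert]
  tauto

end Recovery

section ConfigCode

variable {k b q : ℕ} {A : Fin b → Finset (Fin k)} {B : Fin q → Finset (Fin b)}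

-- The supports of the rows of `H` belonging to the line `i` and to the block `w`.
def lineCheck (A : Fin b → Finset (Fin k)) (i : Fin b) : Finset (Fin k ⊕ Fin b ⊕ Fin q) :=
  insert (.inr (.inl i)) ((A i).map .inl)

def blockCheck (B : Fin q → Finset (Fin b)) (w : Fin q) : Finset (Fin k ⊕ Fin b ⊕ Fin q) :=
  insert (.inr (.inr w)) ((B w).map (Function.Embedding.inl.trans .inr))

theorem sum_lineCheck_eq_zero {x : Fin k ⊕ Fin b ⊕ Fin q → ZMod 2}
    (hx : x ∈ ConfigCode k b q A B) (i : Fin b) : ∑ j ∈ lineCheck A i, x j = 0 := by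
  rw [lineCheck, sum_insert (by simp), sum_map, hx.1 i]
  exact CharTwo.add_self_eq_zero _

theorem sum_blockCheck_eq_zero {x : Fin k ⊕ Fin b ⊕ Fin q → ZMod 2}
    (hx : x ∈ ConfigCode k b q A B) (w : Fin q) : ∑ j ∈ blockCheck B w, x j = 0 := by
  rw [blockCheck, sum_insert (by simp), sum_map, hx.2 w]
  exact CharTwo.add_self_eq_zero _

theorem recoverableFromCompl_of_lineCheck {r : ℕ} {E : Finset (Fin k ⊕ Fin b ⊕ Fin q)}
    {i : Fin b} (hAi : (A i).card ≤ r) {c : Fin k ⊕ Fin b ⊕ Fin q} (hc : c ∈ lineCheck A i)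
    (hparity : .inr (.inl i) ∈ E → .inr (.inl i) = c)
    (hpoints : ∀ p ∈ A i, .inl p ∈ E → .inl p = c) :
    RecoverableFromCompl (ConfigCode k b q A B) r E c := by
  refine recoverableFromCompl_of_sum_eq_zero (fun x hx => sum_lineCheck_eq_zero hx i) ?_ hc ?_
  · exact (card_insert_le _ _).trans (by simpa using hAi)
  · simpa [lineCheck] using ⟨hparity, hpoints⟩

theorem recoverableFromCompl_of_blockCheck {r : ℕ} {E : Finset (Fin k ⊕ Fin b ⊕ Fin q)}
    {w : Fin q} (hBw : (B w).card ≤ r) {c : Fin k ⊕ Fin b ⊕ Fin q} (hc : c ∈ blockCheck B w)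
    (hparity : .inr (.inr w) ∈ E → .inr (.inr w) = c)
    (hlines : ∀ j ∈ B w, .inr (.inl j) ∈ E → .inr (.inl j) = c) :
    RecoverableFromCompl (ConfigCode k b q A B) r E c := by
  refine recoverableFromCompl_of_sum_eq_zero (fun x hx => sum_blockCheck_eq_zero hx w) ?_ hc ?_
  · exact (card_insert_le _ _).trans (by simpa using hBw)
  · simpa [blockCheck] using ⟨hparity, hlines⟩

def encode (A : Fin b → Finset (Fin k)) (B : Fin q → Finset (Fin b)) (f : Fin k → ZMod 2) :
    Fin k ⊕ Fin b ⊕ Fin q → ZMod 2 :=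
  Sum.elim f (Sum.elim (fun i => ∑ j ∈ A i, f j) (fun w => ∑ i ∈ B w, ∑ j ∈ A i, f j))

theorem encode_mem_configCode (f : Fin k → ZMod 2) : encode A B f ∈ ConfigCode k b q A B :=
  ⟨fun _ => rfl, fun _ => rfl⟩

theorem eq_encode_of_mem_configCode {x : Fin k ⊕ Fin b ⊕ Fin q → ZMod 2}
    (hx : x ∈ ConfigCode k b q A B) : x = encode A B (fun j => x (.inl j)) := by
  funext c
  rcases c with j | i | w
  · rfl
  · exact hx.1 i
  · simp only [encode, Sum.elim_inr, hx.2 w, hx.1]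

theorem finrank_configCode : Module.finrank (ZMod 2) (ConfigCode k b q A B) = k := by
  let π := (LinearMap.funLeft (ZMod 2) (ZMod 2) Sum.inl).comp (ConfigCode k b q A B).subtype
  have hπ : Function.Bijective π := by
    refine ⟨fun x y hxy => Subtype.ext ?_, fun f => ⟨⟨_, encode_mem_configCode f⟩, rfl⟩⟩
    rw [eq_encode_of_mem_configCode x.2, eq_encode_of_mem_configCode y.2]
    exact congrArg _ hxy
  rw [(LinearEquiv.ofBijective π hπ).finrank_eq, Module.finrank_fin_fun]

end ConfigCode

section Configuration

variable {k b t : ℕ} {A : Fin b → Finset (Fin k)}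

theorem sum_card_erase_inter_le
    (hpair : ∀ x y : Fin k, x ≠ y → (univ.filter (fun i => x ∈ A i ∧ y ∈ A i)).card ≤ 1)
    {x : Fin k} {T : Finset (Fin b)} (hT : ∀ i ∈ T, x ∈ A i) (P : Finset (Fin k)) :
    ∑ i ∈ T, ((A i ∩ P).erase x).card ≤ (P.erase x).card := by
  rw [← card_biUnion]
  · exact card_le_card (biUnion_subset.mpr fun i _ => erase_subset_erase x inter_subset_right)
  · intro i hi i' hi' hne
    refine disjoint_left.mpr fun y hy hy' => hne ?_
    simp only [mem_erase, mem_inter] at hy hy'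
    exact card_le_one.mp (hpair x y (Ne.symm hy.1)) i (by simp [hT i hi, hy.2.1])
      i' (by simp [hT i' hi', hy'.2.1])

-- Each of the `t - 1` lines through `x` contributes at least `1`, the first summands add up to at
-- most `|L|` and, as the lines through `x` meet pairwise only in `x`, the second ones to at most
-- `|P| - 1`; with `|P| + |L| + m ≤ t` nothing is left over.
theorem blocked_lines_count_tight
    (hpoint : ∀ x : Fin k, (univ.filter (fun i => x ∈ A i)).card = t - 1)
    (hpair : ∀ x y : Fin k, x ≠ y → (univ.filter (fun i => x ∈ A i ∧ y ∈ A i)).card ≤ 1)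
    {P : Finset (Fin k)} {L : Finset (Fin b)} {m : ℕ} (hsize : P.card + L.card + m ≤ t)
    {x : Fin k} (hx : x ∈ P) (hblocked : ∀ i, x ∈ A i → i ∉ L → ((A i ∩ P).erase x).Nonempty) :
    m = 0 ∧ P.card + L.card = t ∧ (∀ i ∈ L, x ∈ A i) ∧
      ∀ i, x ∈ A i → (if i ∈ L then 1 else 0) + ((A i ∩ P).erase x).card = 1 := by
  set T := univ.filter (fun i => x ∈ A i)
  have hmemT : ∀ i, i ∈ T ↔ x ∈ A i := by simp [T]
  set f : Fin b → ℕ := fun i => (if i ∈ L then 1 else 0) + ((A i ∩ P).erase x).card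
  have hf : ∀ i ∈ T, 1 ≤ f i := by
    intro i hi
    by_cases hiL : i ∈ L
    · simp [f, hiL]
    · simpa [f, hiL, card_pos] using hblocked i ((hmemT i).mp hi) hiL
  have hsplit : ∑ i ∈ T, f i = (T.filter (· ∈ L)).card + ∑ i ∈ T, ((A i ∩ P).erase x).card := by
    simp only [f, sum_add_distrib, sum_boole, Nat.cast_id]
  have hTL : T.filter (· ∈ L) ⊆ L := fun i hi => (mem_filter.mp hi).2
  have hcards := sum_card_erase_inter_le hpair (fun i hi => (hmemT i).mp hi) P
  have hcount : ∑ i ∈ T, 1 ≤ ∑ i ∈ T, f i := sum_le_sum hf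
  rw [sum_const, smul_eq_mul, mul_one, hpoint x] at hcount
  rw [card_erase_of_mem hx] at hcards
  have hP := card_pos.mpr ⟨x, hx⟩
  have hLT := card_le_card hTL
  refine ⟨by omega, by omega, fun i hi => ?_, fun i hi => ?_⟩
  · have hLeq : T.filter (· ∈ L) = L := eq_of_subset_of_card_le hTL (by omega)
    rw [← hLeq] at hi
    exact (hmemT i).mp (mem_filter.mp hi).1
  · refine ((sum_eq_sum_iff_of_le hf).mp ?_ i ((hmemT i).mpr hi)).symm
    rw [sum_const, smul_eq_mul, mul_one, hpoint x]
    omega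

theorem even_card_of_card_fiber_eq_two {α β : Type*} [DecidableEq β] (f : α → β) (P : Finset α)
    (h : ∀ x ∈ P, (P.filter (fun y => f y = f x)).card = 2) : Even P.card := by
  rw [card_eq_sum_card_image f P, sum_congr rfl (g := fun _ => 2), sum_const, smul_eq_mul]
  · exact even_two.mul_left _
  · intro y hy
    obtain ⟨x, hx, rfl⟩ := mem_image.mp hy
    exact h x hx

theorem even_card_of_card_erase_inter_eq_one {s : ℕ}
    (hclass : ∀ x : Fin k, ∃! i : Fin b, (i : ℕ) < s ∧ x ∈ A i) {P : Finset (Fin k)}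
    (h : ∀ x ∈ P, ∀ i : Fin b, (i : ℕ) < s → x ∈ A i → ((A i ∩ P).erase x).card = 1) :
    Even P.card := by
  choose c hc hcu using hclass
  refine even_card_of_card_fiber_eq_two c P fun x hx => ?_
  have hfiber : P.filter (fun y => c y = c x) = A (c x) ∩ P := by
    ext y
    simp only [mem_filter, mem_inter]
    constructor
    · rintro ⟨hy, hcy⟩
      exact ⟨hcy ▸ (hc y).2, hy⟩
    · rintro ⟨hyA, hy⟩
      exact ⟨hy, (hcu y (c x) ⟨(hc x).1, hyA⟩).symm⟩
  rw [hfiber, ← card_erase_add_one (mem_inter.mpr ⟨(hc x).2, hx⟩), h x hx _ (hc x).1 (hc x).2]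

end Configuration

section Recoverability

variable {k b q r t s : ℕ} {A : Fin b → Finset (Fin k)} {B : Fin q → Finset (Fin b)}

theorem exists_recoverable_of_forall_inl_notMem (hline : ∀ i, (A i).card ≤ r)
    (hBcard : ∀ w, (B w).card ≤ r) {E : Finset (Fin k ⊕ Fin b ⊕ Fin q)} (hne : E.Nonempty)
    (hpoints : ∀ p : Fin k, .inl p ∉ E) :
    ∃ c ∈ E, RecoverableFromCompl (ConfigCode k b q A B) r E c := by
  by_cases hlines : ∃ i : Fin b, .inr (.inl i) ∈ E
  · obtain ⟨i, hi⟩ := hlines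
    exact ⟨_, hi, recoverableFromCompl_of_lineCheck (hline i) (mem_insert_self _ _)
      (fun _ => rfl) fun p _ hp => absurd hp (hpoints p)⟩
  push Not at hlines
  obtain ⟨e, he⟩ := hne
  rcases e with p | i | w
  · exact absurd he (hpoints p)
  · exact absurd he (hlines i)
  · exact ⟨_, he, recoverableFromCompl_of_blockCheck (hBcard w) (mem_insert_self _ _)
      (fun _ => rfl) fun j _ hj => absurd hj (hlines j)⟩

theorem exists_recoverable_of_blocked (hodd : Odd t)
    (hpoint : ∀ x : Fin k, (univ.filter (fun i => x ∈ A i)).card = t - 1)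
    (hpair : ∀ x y : Fin k, x ≠ y → (univ.filter (fun i => x ∈ A i ∧ y ∈ A i)).card ≤ 1)
    (hclass : ∀ x : Fin k, ∃! i : Fin b, (i : ℕ) < s ∧ x ∈ A i)
    (hBlt : ∀ w, ∀ j ∈ B w, (j : ℕ) < s) (hBcard : ∀ w, (B w).card ≤ r)
    (hBcover : ∀ j : Fin b, (j : ℕ) < s → ∃ w, j ∈ B w)
    {E : Finset (Fin k ⊕ Fin b ⊕ Fin q)} (hE : E.card ≤ t) {x : Fin k} (hx : x ∈ E.toLeft)
    (hblocked : ∀ y ∈ E.toLeft, ∀ i, y ∈ A i → i ∉ E.toRight.toLeft →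
      ((A i ∩ E.toLeft).erase y).Nonempty) :
    ∃ c ∈ E, RecoverableFromCompl (ConfigCode k b q A B) r E c := by
  set P := E.toLeft
  set L := E.toRight.toLeft
  have hsize : P.card + L.card + E.toRight.toRight.card ≤ t := by
    rwa [add_assoc, card_toLeft_add_card_toRight, card_toLeft_add_card_toRight]
  have htight := fun y hy => blocked_lines_count_tight hpoint hpair hsize hy (hblocked y hy)
  obtain ⟨hQ, hPL, hLx, hone⟩ := htight x hx
  rcases L.eq_empty_or_nonempty with hL | ⟨i, hi⟩
  · have heven : Even P.card := even_card_of_card_erase_inter_eq_one hclass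
      fun y hy j _ hyj => by simpa [hL] using (htight y hy).2.2.2 j hyj
    rw [hL, card_empty, add_zero] at hPL
    exact absurd hodd (Nat.not_odd_iff_even.mpr (hPL ▸ heven))
  have hPx : P.erase x = ∅ := by
    have h0 : (A i ∩ P).erase x = ∅ := by simpa [hi] using hone i (hLx i hi)
    refine eq_empty_of_forall_notMem fun y hy => ?_
    have hyP := mem_of_mem_erase hy
    have : y ∈ (A i ∩ P).erase x :=
      mem_erase.mpr ⟨ne_of_mem_erase hy, mem_inter.mpr ⟨(htight y hyP).2.2.1 i hi, hyP⟩⟩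
    simp [h0] at this
  obtain ⟨i₀, ⟨hi₀s, hxi₀⟩, hi₀u⟩ := hclass x
  have hi₀L : i₀ ∈ L := by
    have h0 : (A i₀ ∩ P).erase x = ∅ :=
      subset_empty.mp (hPx ▸ erase_subset_erase x inter_subset_right)
    by_contra h
    simpa [h, h0] using hone i₀ hxi₀
  obtain ⟨w, hw⟩ := hBcover i₀ hi₀s
  refine ⟨.inr (.inl i₀), by simpa [L] using hi₀L, recoverableFromCompl_of_blockCheck (hBcard w)
    (by simp [blockCheck, hw]) (fun hwE => ?_) fun j hj hjE => ?_⟩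
  · exact absurd (card_eq_zero.mp hQ) (ne_empty_of_mem (by simpa using hwE))
  · rw [hi₀u j ⟨hBlt w j hj, hLx j (by simpa [L] using hjE)⟩]

theorem exists_recoverable_configCode (hodd : Odd t) (hline : ∀ i, (A i).card ≤ r)
    (hpoint : ∀ x : Fin k, (univ.filter (fun i => x ∈ A i)).card = t - 1)
    (hpair : ∀ x y : Fin k, x ≠ y → (univ.filter (fun i => x ∈ A i ∧ y ∈ A i)).card ≤ 1)
    (hclass : ∀ x : Fin k, ∃! i : Fin b, (i : ℕ) < s ∧ x ∈ A i)
    (hBlt : ∀ w, ∀ j ∈ B w, (j : ℕ) < s) (hBcard : ∀ w, (B w).card ≤ r)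
    (hBcover : ∀ j : Fin b, (j : ℕ) < s → ∃ w, j ∈ B w)
    {E : Finset (Fin k ⊕ Fin b ⊕ Fin q)} (hne : E.Nonempty) (hE : E.card ≤ t) :
    ∃ c ∈ E, RecoverableFromCompl (ConfigCode k b q A B) r E c := by
  by_cases hpoints : ∃ x : Fin k, .inl x ∈ E
  swap
  · push Not at hpoints
    exact exists_recoverable_of_forall_inl_notMem hline hBcard hne hpoints
  obtain ⟨x, hx⟩ := hpoints
  by_cases hgood : ∃ y ∈ E.toLeft, ∃ i, y ∈ A i ∧ i ∉ E.toRight.toLeft ∧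
      (A i ∩ E.toLeft).erase y = ∅
  · obtain ⟨y, hy, i, hyi, hiL, hlone⟩ := hgood
    refine ⟨.inl y, mem_toLeft.mp hy, recoverableFromCompl_of_lineCheck (hline i)
      (by simp [lineCheck, hyi]) (fun h => absurd (by simpa using h) hiL) fun p hp hpE => ?_⟩
    by_contra hpy
    have : p ∈ (A i ∩ E.toLeft).erase y :=
      mem_erase.mpr ⟨by rintro rfl; exact hpy rfl, mem_inter.mpr ⟨hp, mem_toLeft.mpr hpE⟩⟩
    simp [hlone] at this
  · push Not at hgood
    exact exists_recoverable_of_blocked hodd hpoint hpair hclass hBlt hBcard hBcover hE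
      (mem_toLeft.mpr hx) hgood

end Recoverability

theorem rate_eq {k t r s b q : ℕ} (hk0 : 0 < k) (ht : 1 ≤ t) (hk : k = r * s)
    (hb : b = s * (t - 1)) :
    (k : ℚ) / ((k : ℚ) + b + q) = (1 + ((t : ℚ) - 1) / r + (q : ℚ) / k)⁻¹ := by
  subst hk hb
  have hr : (r : ℚ) ≠ 0 := by exact_mod_cast (Nat.pos_of_mul_pos_right hk0).ne'
  have hk : ((r * s : ℕ) : ℚ) ≠ 0 := by exact_mod_cast hk0.ne'
  rw [← inv_div, Nat.cast_mul (s) (t - 1), Nat.cast_sub ht]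
  congr 1
  field_simp
  push_cast
  ring

theorem configCode_is_SLRC_general (k t r s b q : ℕ) (hrk : r < k)
    (hk : k = r * s) (hb : b = s * (t - 1)) (hq : q = (s + r - 1) / r)
    (htodd : Odd t)
    (A : Fin b → Finset (Fin k))
    (hline : ∀ i, (A i).card = r)
    (hpoint : ∀ x : Fin k, (Finset.univ.filter (fun i => x ∈ A i)).card = t - 1)
    (hpair : ∀ x y : Fin k, x ≠ y →
      (Finset.univ.filter (fun i => x ∈ A i ∧ y ∈ A i)).card ≤ 1)
    (hclass : ∀ ℓ : Fin (t - 1), ∀ x : Fin k,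
      ∃! i : Fin b, (i : ℕ) / s = (ℓ : ℕ) ∧ x ∈ A i)
    (B : Fin q → Finset (Fin b))
    (hBlt : ∀ i, ∀ j ∈ B i, (j : ℕ) < s)
    (hBne : ∀ i, (B i).Nonempty)
    (hBcard : ∀ i, (B i).card ≤ r)
    (hBpart : ∀ j : Fin b, (j : ℕ) < s → ∃! i, j ∈ B i) :
    IsSLRC (ConfigCode k b q A B) r t ∧
    Module.finrank (ZMod 2) (ConfigCode k b q A B) = k ∧
    Fintype.card (Fin k ⊕ Fin b ⊕ Fin q) = k + b + q ∧
    (k : ℚ) / ((k : ℚ) + b + q) = (1 + ((t : ℚ) - 1) / r + (q : ℚ) / k)⁻¹ := by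
  have hr : 0 < r := Nat.pos_of_mul_pos_right (hk ▸ (Nat.zero_le r).trans_lt hrk)
  have hs : 0 < s := Nat.pos_of_mul_pos_left (hk ▸ (Nat.zero_le r).trans_lt hrk)
  have ht : 0 < t - 1 := by
    have hq0 : 0 < q := hq ▸ Nat.div_pos (by omega) hr
    obtain ⟨j, -⟩ := hBne ⟨0, hq0⟩
    exact Nat.pos_of_mul_pos_left (hb ▸ j.pos)
  have hclass₀ : ∀ x : Fin k, ∃! i : Fin b, (i : ℕ) < s ∧ x ∈ A i := by
    simpa only [Nat.div_eq_zero_iff, hs.ne', false_or] using hclass ⟨0, ht⟩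
  refine ⟨isSLRC_of_forall_exists_recoverable fun E hne hE => ?_, finrank_configCode,
    by simp [add_assoc], rate_eq (by omega) htodd.pos hk hb⟩
  exact exists_recoverable_configCode htodd (fun i => (hline i).le) hpoint hpair hclass₀ hBlt
    hBcard (fun j hj => (hBpart j hj).exists) hne hE

/-- Theorem 3: given a `(k_{t-1}, b_r)` resolvable configuration on `X = [k]`
whose lines are ordered so that for each `ℓ` the lines with index `i` satisfying
`i / s = ℓ` form a parallel class (`s = k/r`, `b = s(t-1)`), and a partition of the
first `s` line-indices into `q = ⌈s/r⌉` nonempty blocks `B i` of size at most `r`,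
if `t` is odd then the binary code with parity check matrix
`H = [[M, I_b, 0], [0, W, I_q]]` is an `(n, k, r, t)`-SLRC with length
`n = k + b + q` and dimension `k`; hence its rate is `k/n = (1 + (t-1)/r + q/k)⁻¹`. -/
theorem configCode_is_SLRC (k t r s b q : ℕ) (hr2 : 2 ≤ r) (hrk : r < k)
    (hk : k = r * s) (hb : b = s * (t - 1)) (hq : q = (s + r - 1) / r)
    (htodd : Odd t)
    (A : Fin b → Finset (Fin k))
    (hline : ∀ i, (A i).card = r)
    (hpoint : ∀ x : Fin k, (Finset.univ.filter (fun i => x ∈ A i)).card = t - 1)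
    (hpair : ∀ x y : Fin k, x ≠ y →
      (Finset.univ.filter (fun i => x ∈ A i ∧ y ∈ A i)).card ≤ 1)
    (hclass : ∀ ℓ : Fin (t - 1), ∀ x : Fin k,
      ∃! i : Fin b, (i : ℕ) / s = (ℓ : ℕ) ∧ x ∈ A i)
    (B : Fin q → Finset (Fin b))
    (hBlt : ∀ i, ∀ j ∈ B i, (j : ℕ) < s)
    (hBne : ∀ i, (B i).Nonempty)
    (hBcard : ∀ i, (B i).card ≤ r)
    (hBpart : ∀ j : Fin b, (j : ℕ) < s → ∃! i, j ∈ B i) :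
    IsSLRC (ConfigCode k b q A B) r t ∧
    Module.finrank (ZMod 2) (ConfigCode k b q A B) = k ∧
    Fintype.card (Fin k ⊕ Fin b ⊕ Fin q) = k + b + q ∧
    (k : ℚ) / ((k : ℚ) + b + q) = (1 + ((t : ℚ) - 1) / r + (q : ℚ) / k)⁻¹ :=
  configCode_is_SLRC_general k t r s b q hrk hk hb hq htodd A hline hpoint hpair hclass B hBlt hBne
    hBcard hBpart
end
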